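/- arXiv:1509.01326 — 8 statements merged into one kernel-verified Lean document; each statement's English description precedes it below -/
import Mathlib

section
/- If X ⊆ L_{1k2} satisfies D(X) < D(L_{1k2}) = sqrt(10), then D(X) ≤ sqrt(8). -/
open scoped Classical

/-- `L m k l` is the set of vectors in `ℝ^(m+k+l)` with exactly `m` entries `-1`,
`k` entries `0`, and `l` entries `1`. -/
def L (m k l : ℕ) : Set (EuclideanSpace ℝ (Fin (m+k+l))) :=
  {x | (Finset.univ.filter (fun i => x i = (-1:ℝ))).card = m ∧
       (Finset.univ.filter (fun i => x i = (0:ℝ))).card = k ∧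
       (Finset.univ.filter (fun i => x i = (1:ℝ))).card = l}

lemma L_union {m k l : ℕ} {x : EuclideanSpace ℝ (Fin (m+k+l))} (hx : x ∈ L m k l) :
    (Finset.univ.filter (fun j => x j = (-1:ℝ))) ∪
      (Finset.univ.filter (fun j => x j = (0:ℝ))) ∪
      (Finset.univ.filter (fun j => x j = (1:ℝ))) = Finset.univ := by
  obtain ⟨h1, h2, h3⟩ := hx
  apply Finset.eq_univ_of_card
  have hd1 : Disjoint (Finset.univ.filter (fun j => x j = (-1:ℝ)))
      (Finset.univ.filter (fun j => x j = (0:ℝ))) := by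
    rw [Finset.disjoint_filter]
    intro i _ hi hj
    rw [hi] at hj; norm_num at hj
  have hd2 : Disjoint ((Finset.univ.filter (fun j => x j = (-1:ℝ))) ∪
      (Finset.univ.filter (fun j => x j = (0:ℝ))))
      (Finset.univ.filter (fun j => x j = (1:ℝ))) := by
    rw [Finset.disjoint_union_left]
    constructor <;> (rw [Finset.disjoint_filter]; intro i _ hi hj; rw [hi] at hj; norm_num at hj)
  rw [Finset.card_union_of_disjoint hd2, Finset.card_union_of_disjoint hd1, h1, h2, h3]
  simp

lemma L_vals {m k l : ℕ} {x : EuclideanSpace ℝ (Fin (m+k+l))} (hx : x ∈ L m k l)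
    (i : Fin (m+k+l)) : x i = -1 ∨ x i = 0 ∨ x i = 1 := by
  have := L_union hx
  have hi : i ∈ (Finset.univ.filter (fun j => x j = (-1:ℝ))) ∪
      (Finset.univ.filter (fun j => x j = (0:ℝ))) ∪
      (Finset.univ.filter (fun j => x j = (1:ℝ))) := by rw [this]; exact Finset.mem_univ i
  simp only [Finset.mem_union, Finset.mem_filter, Finset.mem_univ, true_and] at hi
  tauto

lemma key {k : ℕ} {x y : EuclideanSpace ℝ (Fin (1+k+2))}
    (hx : x ∈ L 1 k 2) (hy : y ∈ L 1 k 2) :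
    ∃ z : ℤ, dist x y ^ 2 = 6 - 2 * (z : ℝ) ∧ -2 ≤ z := by
  have hsum2 : ∀ {w : EuclideanSpace ℝ (Fin (1+k+2))}, w ∈ L 1 k 2 →
      ∑ i, (w i) ^ 2 = 3 := by
    intro w hw
    have hw' := hw
    obtain ⟨h1, h2, h3⟩ := hw'
    rw [show (Finset.univ : Finset (Fin (1+k+2))) = _ from (L_union hw).symm]
    · have hd1 : Disjoint (Finset.univ.filter (fun j => w j = (-1:ℝ)))
          (Finset.univ.filter (fun j => w j = (0:ℝ))) := by
        rw [Finset.disjoint_filter]; intro i _ hi hj; rw [hi] at hj; norm_num at hj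
      have hd2 : Disjoint ((Finset.univ.filter (fun j => w j = (-1:ℝ))) ∪
          (Finset.univ.filter (fun j => w j = (0:ℝ))))
          (Finset.univ.filter (fun j => w j = (1:ℝ))) := by
        rw [Finset.disjoint_union_left]
        constructor <;> (rw [Finset.disjoint_filter]; intro i _ hi hj; rw [hi] at hj; norm_num at hj)
      rw [Finset.sum_union hd2, Finset.sum_union hd1]
      have e1 : ∑ i ∈ Finset.univ.filter (fun j => w j = (-1:ℝ)), (w i)^2 = 1 := by
        have hc : ∀ i ∈ Finset.univ.filter (fun j => w j = (-1:ℝ)), (w i)^2 = 1 := by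
          intro i hi; simp only [Finset.mem_filter] at hi; rw [hi.2]; norm_num
        rw [Finset.sum_congr rfl hc, Finset.sum_const, h1]; norm_num
      have e2 : ∑ i ∈ Finset.univ.filter (fun j => w j = (0:ℝ)), (w i)^2 = 0 := by
        apply Finset.sum_eq_zero; intro i hi
        simp only [Finset.mem_filter] at hi; rw [hi.2]; norm_num
      have e3 : ∑ i ∈ Finset.univ.filter (fun j => w j = (1:ℝ)), (w i)^2 = 2 := by
        have hc : ∀ i ∈ Finset.univ.filter (fun j => w j = (1:ℝ)), (w i)^2 = 1 := by
          intro i hi; simp only [Finset.mem_filter] at hi; rw [hi.2]; norm_num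
        rw [Finset.sum_congr rfl hc, Finset.sum_const, h3]; norm_num
      rw [e1, e2, e3]; norm_num
  -- distance formula
  have hdist : dist x y ^ 2 = ∑ i, (x i - y i) ^ 2 := by
    rw [EuclideanSpace.dist_eq, Real.sq_sqrt (Finset.sum_nonneg fun i _ => sq_nonneg _)]
    exact Finset.sum_congr rfl fun i _ => by rw [Real.dist_eq, sq_abs]
  have hexpand : ∑ i, (x i - y i) ^ 2 = 6 - 2 * ∑ i, x i * y i := by
    have : ∀ i : Fin (1+k+2), (x i - y i)^2 = (x i)^2 + (y i)^2 - 2 * (x i * y i) := by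
      intro i; ring
    rw [Finset.sum_congr rfl fun i _ => this i]
    rw [Finset.sum_sub_distrib, Finset.sum_add_distrib, hsum2 hx, hsum2 hy,
      ← Finset.mul_sum]
    ring
  -- integrality
  set g : Fin (1+k+2) → ℤ := fun i =>
    if x i * y i = -1 then -1 else if x i * y i = 1 then 1 else 0 with hg
  have hgi : ∀ i, ((g i : ℝ)) = x i * y i := by
    intro i
    rcases L_vals hx i with h1 | h1 | h1 <;> rcases L_vals hy i with h2 | h2 | h2 <;>
      (simp only [hg, h1, h2]; norm_num)
  have hcast : ∑ i, x i * y i = ((∑ i, g i : ℤ) : ℝ) := by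
    push_cast
    exact Finset.sum_congr rfl fun i _ => (hgi i).symm
  -- lower bound on inner product
  have hlow : (-2 : ℝ) ≤ ∑ i, x i * y i := by
    have hstep : ∀ i ∈ Finset.univ,
        (if x i * y i = -1 then (-1:ℝ) else 0) ≤ x i * y i := by
      intro i _
      split_ifs with h
      · rw [h]
      · rcases L_vals hx i with h1 | h1 | h1 <;> rcases L_vals hy i with h2 | h2 | h2 <;>
          simp only [h1, h2] at h ⊢ <;> norm_num at h <;> norm_num
    have hsum := Finset.sum_le_sum hstep
    have hN : ∑ i, (if x i * y i = -1 then (-1:ℝ) else 0) =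
        -(Finset.univ.filter (fun i => x i * y i = -1)).card := by
      rw [Finset.sum_ite, Finset.sum_const, Finset.sum_const]
      simp
    have hcard : (Finset.univ.filter (fun i => x i * y i = -1)).card ≤ 2 := by
      have hsub : Finset.univ.filter (fun i => x i * y i = -1) ⊆
          (Finset.univ.filter (fun j => x j = (-1:ℝ))) ∪
          (Finset.univ.filter (fun j => y j = (-1:ℝ))) := by
        intro i hi
        simp only [Finset.mem_filter, Finset.mem_univ, true_and, Finset.mem_union] at hi ⊢
        rcases L_vals hx i with h1 | h1 | h1 <;> rcases L_vals hy i with h2 | h2 | h2 <;>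
          rw [h1, h2] at hi <;> norm_num at hi <;> tauto
      calc (Finset.univ.filter (fun i => x i * y i = -1)).card
          ≤ ((Finset.univ.filter (fun j => x j = (-1:ℝ))) ∪
            (Finset.univ.filter (fun j => y j = (-1:ℝ)))).card := Finset.card_le_card hsub
        _ ≤ (Finset.univ.filter (fun j => x j = (-1:ℝ))).card +
            (Finset.univ.filter (fun j => y j = (-1:ℝ))).card := Finset.card_union_le _ _
        _ ≤ 2 := by rw [hx.1, hy.1]
    rw [hN] at hsum
    have : ((Finset.univ.filter (fun i => x i * y i = -1)).card : ℝ) ≤ 2 := by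
      exact_mod_cast hcard
    linarith
  refine ⟨∑ i, g i, ?_, ?_⟩
  · rw [hdist, hexpand, hcast]
  · rw [hcast] at hlow
    exact_mod_cast hlow

theorem stmt_2 (k : ℕ) (hk : 1 ≤ k) (X : Set (EuclideanSpace ℝ (Fin (1+k+2))))
    (hX : X ⊆ L 1 k 2) (hD : Metric.diam X < Metric.diam (L 1 k 2)) :
    Metric.diam X ≤ Real.sqrt 8 := by
  have hL10 : ∀ x ∈ L 1 k 2, ∀ y ∈ L 1 k 2, dist x y ≤ Real.sqrt 10 := by
    intro x hx y hy
    obtain ⟨z, hz, hz2⟩ := key hx hy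
    have hzr : (-2 : ℝ) ≤ (z : ℝ) := by exact_mod_cast hz2
    have hsq : dist x y ^ 2 ≤ 10 := by rw [hz]; linarith
    calc dist x y = Real.sqrt (dist x y ^ 2) := (Real.sqrt_sq dist_nonneg).symm
      _ ≤ Real.sqrt 10 := Real.sqrt_le_sqrt hsq
  have hdiamL : Metric.diam (L 1 k 2) ≤ Real.sqrt 10 :=
    Metric.diam_le_of_forall_dist_le (Real.sqrt_nonneg 10) hL10
  have hXb : Bornology.IsBounded X :=
    Metric.isBounded_iff.mpr ⟨Real.sqrt 10, fun {x} hx {y} hy => hL10 x (hX hx) y (hX hy)⟩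
  apply Metric.diam_le_of_forall_dist_le (Real.sqrt_nonneg 8)
  intro x hx y hy
  have hlt : dist x y < Real.sqrt 10 :=
    lt_of_le_of_lt (Metric.dist_le_diam_of_mem hXb hx hy) (lt_of_lt_of_le hD hdiamL)
  obtain ⟨z, hz, hz2⟩ := key (hX hx) (hX hy)
  have hsq : dist x y ^ 2 < 10 := by
    nlinarith [Real.sq_sqrt (show (0:ℝ) ≤ 10 by norm_num), Real.sqrt_nonneg 10, dist_nonneg (x := x) (y := y)]
  have hzgt : (-2 : ℝ) < (z : ℝ) := by rw [hz] at hsq; linarith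
  have hzge : (-1 : ℤ) ≤ z := by
    have : (-2 : ℤ) < z := by exact_mod_cast hzgt
    omega
  have hsq8 : dist x y ^ 2 ≤ 8 := by
    have : (-1 : ℝ) ≤ (z : ℝ) := by exact_mod_cast hzge
    rw [hz]; linarith
  calc dist x y = Real.sqrt (dist x y ^ 2) := (Real.sqrt_sq dist_nonneg).symm
    _ ≤ Real.sqrt 8 := Real.sqrt_le_sqrt hsq8
end

section
/- Suppose m = l. Then the maximum size of a subset X ⊆ L_{mkl} with D(X) < D(L_{mkl}) equals (1/2) * binomial(m+k+l, m) * binomial(k+m, m), i.e., half the cardinality of L_{mkl}. -/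
open scoped Classical

namespace Stmt3

variable {m k : ℕ}

open Finset

-- the three filters cover univ
lemma filters_union (x : EuclideanSpace ℝ (Fin (m+k+m))) (hx : x ∈ L m k m) :
    (univ.filter (fun i => x i = (-1:ℝ))) ∪ (univ.filter (fun i => x i = (0:ℝ)))
      ∪ (univ.filter (fun i => x i = (1:ℝ))) = univ := by
  obtain ⟨h1, h0, h2⟩ := hx
  apply Finset.eq_univ_of_card
  have d01 : Disjoint (univ.filter (fun i => x i = (-1:ℝ)))
      (univ.filter (fun i => x i = (0:ℝ))) := by
    simp only [Finset.disjoint_left, mem_filter]; rintro a ⟨_, h⟩ ⟨_, h'⟩; rw [h] at h'; norm_num at h'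
  have d02 : Disjoint ((univ.filter (fun i => x i = (-1:ℝ))) ∪ (univ.filter (fun i => x i = (0:ℝ))))
      (univ.filter (fun i => x i = (1:ℝ))) := by
    simp only [Finset.disjoint_left, mem_union, mem_filter]
    rintro a (⟨_, h⟩|⟨_, h⟩) ⟨_, h'⟩ <;> rw [h] at h' <;> norm_num at h'
  rw [Finset.card_union_of_disjoint d02, Finset.card_union_of_disjoint d01, h1, h0, h2]
  simp

lemma mem_cases (x : EuclideanSpace ℝ (Fin (m+k+m))) (hx : x ∈ L m k m) (i : Fin (m+k+m)) :
    x i = -1 ∨ x i = 0 ∨ x i = 1 := by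
  have := filters_union x hx
  have hi : i ∈ (univ : Finset (Fin (m+k+m))) := Finset.mem_univ i
  rw [← this] at hi
  simp only [mem_union, mem_filter] at hi
  tauto

lemma sum_split (x : EuclideanSpace ℝ (Fin (m+k+m))) (hx : x ∈ L m k m) (f : ℝ → ℝ) :
    ∑ i, f (x i) = m * f (-1) + k * f 0 + m * f 1 := by
  obtain ⟨h1, h0, h2⟩ := hx
  have hu := filters_union x ⟨h1, h0, h2⟩
  have d01 : Disjoint (univ.filter (fun i => x i = (-1:ℝ)))
      (univ.filter (fun i => x i = (0:ℝ))) := by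
    simp only [Finset.disjoint_left, mem_filter]; rintro a ⟨_, h⟩ ⟨_, h'⟩; rw [h] at h'; norm_num at h'
  have d02 : Disjoint ((univ.filter (fun i => x i = (-1:ℝ))) ∪ (univ.filter (fun i => x i = (0:ℝ))))
      (univ.filter (fun i => x i = (1:ℝ))) := by
    simp only [Finset.disjoint_left, mem_union, mem_filter]
    rintro a (⟨_, h⟩|⟨_, h⟩) ⟨_, h'⟩ <;> rw [h] at h' <;> norm_num at h'
  calc ∑ i, f (x i) = ∑ i ∈ (univ.filter (fun i => x i = (-1:ℝ))) ∪ (univ.filter (fun i => x i = (0:ℝ)))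
      ∪ (univ.filter (fun i => x i = (1:ℝ))), f (x i) := by rw [hu]
  _ = _ := by
      rw [Finset.sum_union d02, Finset.sum_union d01]
      rw [Finset.sum_congr rfl (fun i hi => by rw [(mem_filter.1 hi).2] : ∀ i ∈ univ.filter (fun i => x i = (-1:ℝ)), f (x i) = f (-1))]
      rw [Finset.sum_congr rfl (fun i hi => by rw [(mem_filter.1 hi).2] : ∀ i ∈ univ.filter (fun i => x i = (0:ℝ)), f (x i) = f 0)]
      rw [Finset.sum_congr rfl (fun i hi => by rw [(mem_filter.1 hi).2] : ∀ i ∈ univ.filter (fun i => x i = (1:ℝ)), f (x i) = f 1)]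
      simp [h1, h0, h2, mul_comm]


lemma sum_sq (x : EuclideanSpace ℝ (Fin (m+k+m))) (hx : x ∈ L m k m) :
    ∑ i, (x i)^2 = 2*m := by
  have := sum_split x hx (fun t => t^2); simp at this; rw [this]; ring

lemma neg_mem (x : EuclideanSpace ℝ (Fin (m+k+m))) (hx : x ∈ L m k m) : -x ∈ L m k m := by
  obtain ⟨h1, h0, h2⟩ := hx
  refine ⟨?_, ?_, ?_⟩
  · have he : Finset.univ.filter (fun i => (-x) i = (-1:ℝ)) = Finset.univ.filter (fun i => x i = (1:ℝ)) := by
      apply Finset.filter_congr; intro i _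
      show (-(x i) = -1) ↔ _; constructor <;> intro h <;> linarith
    rw [he, h2]
  · have he : Finset.univ.filter (fun i => (-x) i = (0:ℝ)) = Finset.univ.filter (fun i => x i = (0:ℝ)) := by
      apply Finset.filter_congr; intro i _
      show (-(x i) = 0) ↔ _; constructor <;> intro h <;> linarith
    rw [he, h0]
  · have he : Finset.univ.filter (fun i => (-x) i = (1:ℝ)) = Finset.univ.filter (fun i => x i = (-1:ℝ)) := by
      apply Finset.filter_congr; intro i _
      show (-(x i) = 1) ↔ _; constructor <;> intro h <;> linarith
    rw [he, h1]

lemma inner_ge (x y : EuclideanSpace ℝ (Fin (m+k+m))) (hx : x ∈ L m k m) (hy : y ∈ L m k m) :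
    -(2*m) ≤ ∑ i, x i * y i := by
  have h : ∀ i ∈ Finset.univ, -((x i)^2) ≤ x i * y i := by
    intro i _
    rcases mem_cases x hx i with h|h|h <;> rcases mem_cases y hy i with h'|h'|h' <;>
      rw [h, h'] <;> norm_num
  calc -(2*(m:ℝ)) = ∑ i, -((x i)^2) := by rw [Finset.sum_neg_distrib, sum_sq x hx]
  _ ≤ _ := Finset.sum_le_sum h

lemma eq_neg_of_inner (x y : EuclideanSpace ℝ (Fin (m+k+m))) (hx : x ∈ L m k m)
    (hy : y ∈ L m k m) (h : ∑ i, x i * y i = -(2*m)) : y = -x := by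
  have hle : ∀ i ∈ Finset.univ, -((x i)^2) ≤ x i * y i := by
    intro i _
    rcases mem_cases x hx i with h|h|h <;> rcases mem_cases y hy i with h'|h'|h' <;>
      rw [h, h'] <;> norm_num
  have hsum : ∑ i, -((x i)^2) = ∑ i, x i * y i := by
    rw [Finset.sum_neg_distrib, sum_sq x hx, h]
  have hpt := (Finset.sum_eq_sum_iff_of_le hle).1 hsum
  -- pointwise: x i = 1 → y i = -1 ; x i = -1 → y i = 1
  have hxy1 : ∀ i, x i = 1 → y i = -1 := by
    intro i hi; have := hpt i (Finset.mem_univ i); rw [hi] at this; linarith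
  have hxy2 : ∀ i, x i = -1 → y i = 1 := by
    intro i hi; have := hpt i (Finset.mem_univ i); rw [hi] at this; linarith
  have hsub1 : (Finset.univ.filter (fun i => x i = (1:ℝ))) ⊆ (Finset.univ.filter (fun i => y i = (-1:ℝ))) := by
    intro i hi; simp only [Finset.mem_filter] at *; exact ⟨hi.1, hxy1 i hi.2⟩
  have hsub2 : (Finset.univ.filter (fun i => x i = (-1:ℝ))) ⊆ (Finset.univ.filter (fun i => y i = (1:ℝ))) := by
    intro i hi; simp only [Finset.mem_filter] at *; exact ⟨hi.1, hxy2 i hi.2⟩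
  have he1 : (Finset.univ.filter (fun i => x i = (1:ℝ))) = (Finset.univ.filter (fun i => y i = (-1:ℝ))) :=
    Finset.eq_of_subset_of_card_le hsub1 (by rw [hy.1, hx.2.2])
  have he2 : (Finset.univ.filter (fun i => x i = (-1:ℝ))) = (Finset.univ.filter (fun i => y i = (1:ℝ))) :=
    Finset.eq_of_subset_of_card_le hsub2 (by rw [hy.2.2, hx.1])
  ext i
  show y i = -(x i)
  rcases mem_cases x hx i with h'|h'|h'
  · rw [h', hxy2 i h']; norm_num
  · rw [h']
    have n1 : i ∉ (Finset.univ.filter (fun i => y i = (-1:ℝ))) := by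
      rw [← he1]; simp [h']
    have n2 : i ∉ (Finset.univ.filter (fun i => y i = (1:ℝ))) := by
      rw [← he2]; simp [h']
    simp only [Finset.mem_filter, Finset.mem_univ, true_and] at n1 n2
    rcases mem_cases y hy i with h''|h''|h'' <;> simp_all
  · rw [h', hxy1 i h']

lemma dist_sq (x y : EuclideanSpace ℝ (Fin (m+k+m))) (hx : x ∈ L m k m) (hy : y ∈ L m k m) :
    dist x y = Real.sqrt (4*m - 2 * ∑ i, x i * y i) := by
  rw [EuclideanSpace.dist_eq]
  congr 1
  have : ∀ i, dist (x i) (y i)^2 = (x i)^2 + (y i)^2 - 2*(x i * y i) := by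
    intro i; rw [Real.dist_eq, sq_abs]; ring
  rw [Finset.sum_congr rfl (fun i _ => this i)]
  rw [Finset.sum_sub_distrib, Finset.sum_add_distrib, sum_sq x hx, sum_sq y hy,
    ← Finset.mul_sum]
  ring

lemma dist_neg (x : EuclideanSpace ℝ (Fin (m+k+m))) (hx : x ∈ L m k m) :
    dist x (-x) = Real.sqrt (8*m) := by
  rw [dist_sq x (-x) hx (neg_mem x hx)]
  have : ∑ i, x i * (-x) i = -(2*m) := by
    have : ∀ i, x i * (-x) i = -((x i)^2) := fun i => by show x i * (-(x i)) = _; ring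
    rw [Finset.sum_congr rfl (fun i _ => this i), Finset.sum_neg_distrib, sum_sq x hx]
  rw [this]; congr 1; ring

lemma inner_le (x y : EuclideanSpace ℝ (Fin (m+k+m))) (hx : x ∈ L m k m) (hy : y ∈ L m k m) :
    ∑ i, x i * y i ≤ 2*m := by
  have h : ∀ i ∈ Finset.univ, x i * y i ≤ (x i)^2 := by
    intro i _
    rcases mem_cases x hx i with h|h|h <;> rcases mem_cases y hy i with h'|h'|h' <;>
      rw [h, h'] <;> norm_num
  calc ∑ i, x i * y i ≤ ∑ i, (x i)^2 := Finset.sum_le_sum h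
  _ = 2*m := sum_sq x hx

lemma dist_lt (x y : EuclideanSpace ℝ (Fin (m+k+m))) (hx : x ∈ L m k m) (hy : y ∈ L m k m)
    (hne : y ≠ -x) : dist x y < Real.sqrt (8*m) := by
  rw [dist_sq x y hx hy]
  apply Real.sqrt_lt_sqrt
  · have h := inner_le x y hx hy
    linarith
  · have h := inner_ge x y hx hy
    rcases lt_or_eq_of_le h with h'|h'
    · linarith
    · exact absurd (eq_neg_of_inner x y hx hy h'.symm) hne

lemma dist_le (x y : EuclideanSpace ℝ (Fin (m+k+m))) (hx : x ∈ L m k m) (hy : y ∈ L m k m) :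
    dist x y ≤ Real.sqrt (8*m) := by
  by_cases hne : y = -x
  · rw [hne, dist_neg x hx]
  · exact (dist_lt x y hx hy hne).le


noncomputable def g (m k : ℕ) (p : (_ : Finset (Fin (m+k+m))) × Finset (Fin (m+k+m))) :
    EuclideanSpace ℝ (Fin (m+k+m)) :=
  WithLp.toLp 2 (fun i => if i ∈ p.1 then -1 else if i ∈ p.2 then 0 else 1)

noncomputable def T (m k : ℕ) : Finset ((_ : Finset (Fin (m+k+m))) × Finset (Fin (m+k+m))) :=
  (Finset.univ.powersetCard m).sigma (fun A => (Aᶜ).powersetCard k)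

lemma g_filters (p : (_ : Finset (Fin (m+k+m))) × Finset (Fin (m+k+m))) (hp : p ∈ T m k) :
    (Finset.univ.filter (fun i => g m k p i = (-1:ℝ))) = p.1 ∧
    (Finset.univ.filter (fun i => g m k p i = (0:ℝ))) = p.2 ∧
    (Finset.univ.filter (fun i => g m k p i = (1:ℝ))) = (p.1 ∪ p.2)ᶜ := by
  rw [T, Finset.mem_sigma, Finset.mem_powersetCard_univ, Finset.mem_powersetCard] at hp
  obtain ⟨hA, hBsub, hB⟩ := hp
  refine ⟨?_, ?_, ?_⟩ <;> ext i <;>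
    simp only [Finset.mem_filter, Finset.mem_univ, true_and, g, Finset.mem_compl,
      Finset.mem_union] <;>
    by_cases h1 : i ∈ p.1 <;> by_cases h2 : i ∈ p.2 <;> simp [h1, h2] <;> norm_num
  all_goals exact absurd (hBsub h2) (by simp [h1])

lemma g_mem (p : (_ : Finset (Fin (m+k+m))) × Finset (Fin (m+k+m))) (hp : p ∈ T m k) :
    g m k p ∈ L m k m := by
  obtain ⟨e1, e2, e3⟩ := g_filters p hp
  rw [T, Finset.mem_sigma, Finset.mem_powersetCard_univ, Finset.mem_powersetCard] at hp
  obtain ⟨hA, hBsub, hB⟩ := hp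
  refine ⟨by rw [e1, hA], by rw [e2, hB], ?_⟩
  rw [e3, Finset.card_compl, Finset.card_union_of_disjoint, hA, hB]
  · simp
  · exact Finset.disjoint_left.2 fun a ha ha2 => by
      have := hBsub ha2; simp at this; exact this ha

lemma L_eq_image : L m k m = g m k '' (T m k : Set _) := by
  ext x
  constructor
  · intro hx
    refine ⟨⟨Finset.univ.filter (fun i => x i = (-1:ℝ)), Finset.univ.filter (fun i => x i = (0:ℝ))⟩, ?_, ?_⟩
    · rw [Finset.mem_coe, T, Finset.mem_sigma]
      refine ⟨Finset.mem_powersetCard_univ.2 hx.1, Finset.mem_powersetCard.2 ⟨?_, hx.2.1⟩⟩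
      intro i hi
      simp only [Finset.mem_filter, Finset.mem_univ, true_and] at hi
      simp only [Finset.mem_compl, Finset.mem_filter, Finset.mem_univ, true_and]
      rw [hi]; norm_num
    · ext i
      show (if i ∈ _ then _ else _) = x i
      rcases mem_cases x hx i with h|h|h <;> simp [h]
      norm_num
  · rintro ⟨p, hp, rfl⟩
    exact g_mem p (by exact_mod_cast hp)

lemma g_injOn : Set.InjOn (g m k) (T m k : Set _) := by
  intro p hp q hq hpq
  obtain ⟨e1, e2, _⟩ := g_filters p (by exact_mod_cast hp)
  obtain ⟨f1, f2, _⟩ := g_filters q (by exact_mod_cast hq)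
  have h1 : p.1 = q.1 := by rw [← e1, ← f1, hpq]
  have h2 : p.2 = q.2 := by rw [← e2, ← f2, hpq]
  exact Sigma.ext h1 (heq_of_eq h2)

lemma card_T : (T m k).card = Nat.choose (m+k+m) m * Nat.choose (k+m) m := by
  rw [T, Finset.card_sigma]
  have : ∀ A ∈ Finset.univ.powersetCard m, ((Aᶜ : Finset (Fin (m+k+m))).powersetCard k).card
      = Nat.choose (k+m) m := by
    intro A hA
    rw [Finset.mem_powersetCard_univ] at hA
    rw [Finset.card_powersetCard, Finset.card_compl, hA, Fintype.card_fin]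
    have h2 : m + k + m - m = k + m := by omega
    rw [h2]
    exact Nat.choose_symm_add
  rw [Finset.sum_congr rfl this, Finset.sum_const, Finset.card_powersetCard,
    Finset.card_univ, Fintype.card_fin, smul_eq_mul]

lemma ncard_L : (L m k m).ncard = Nat.choose (m+k+m) m * Nat.choose (k+m) m := by
  rw [L_eq_image, Set.ncard_image_of_injOn g_injOn, Set.ncard_coe_finset, card_T]

lemma L_finite : (L m k m).Finite := by
  rw [L_eq_image]; exact Set.Finite.image _ (Finset.finite_toSet _)

lemma L_nonempty (hm : 0 < m) (hk : 0 < k) : (L m k m).Nonempty := by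
  have hT : (T m k).Nonempty := by
    obtain ⟨A, hA⟩ := Finset.powersetCard_nonempty.2
      (by simp : m ≤ (Finset.univ : Finset (Fin (m+k+m))).card)
    obtain ⟨B, hB⟩ := Finset.powersetCard_nonempty.2
      (by rw [Finset.card_compl, Fintype.card_fin,
              (Finset.mem_powersetCard_univ.1 hA)]; omega : k ≤ (Aᶜ : Finset (Fin (m+k+m))).card)
    exact ⟨⟨A, B⟩, Finset.mem_sigma.2 ⟨hA, hB⟩⟩
  obtain ⟨p, hp⟩ := hT
  exact ⟨g m k p, g_mem p hp⟩


def pos (x : EuclideanSpace ℝ (Fin (m+k+m))) : Prop :=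
  ∃ i : Fin (m+k+m), x i = 1 ∧ ∀ j < i, x j = 0

lemma not_pos_neg (x : EuclideanSpace ℝ (Fin (m+k+m))) (h : pos x) : ¬ pos (-x) := by
  obtain ⟨i, hi1, hi0⟩ := h
  rintro ⟨i', h1', h0'⟩
  have hneg : ∀ j, (-x) j = -(x j) := fun j => rfl
  rcases lt_trichotomy i i' with h|h|h
  · have := h0' i h; rw [hneg] at this
    have : x i = 0 := by linarith
    rw [hi1] at this; norm_num at this
  · rw [← h, hneg, hi1] at h1'; norm_num at h1'
  · have := hi0 i' h
    rw [hneg, this] at h1'; norm_num at h1'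

lemma pos_or (hm : 0 < m) (x : EuclideanSpace ℝ (Fin (m+k+m))) (hx : x ∈ L m k m) :
    pos x ∨ pos (-x) := by
  have hS : (Finset.univ.filter (fun i => x i ≠ (0:ℝ))).Nonempty := by
    rw [← Finset.card_pos]
    have hsub : (Finset.univ.filter (fun i => x i = (-1:ℝ))) ⊆
        (Finset.univ.filter (fun i => x i ≠ (0:ℝ))) := by
      intro i hi; simp only [Finset.mem_filter] at *
      exact ⟨hi.1, by rw [hi.2]; norm_num⟩
    calc 0 < m := hm
    _ = _ := hx.1.symm
    _ ≤ _ := Finset.card_le_card hsub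
  set i₀ := (Finset.univ.filter (fun i => x i ≠ (0:ℝ))).min' hS with hi₀
  have hmem := (Finset.univ.filter (fun i => x i ≠ (0:ℝ))).min'_mem hS
  rw [Finset.mem_filter] at hmem
  have hzero : ∀ j < i₀, x j = 0 := by
    intro j hj
    by_contra hne
    have : i₀ ≤ j := Finset.min'_le _ _ (by simp [hne])
    exact absurd hj (not_lt.2 this)
  rcases mem_cases x hx i₀ with h|h|h
  · right
    exact ⟨i₀, by show -(x i₀) = 1; rw [h]; norm_num,
      fun j hj => by show -(x j) = 0; rw [hzero j hj]; norm_num⟩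
  · exact absurd h hmem.2
  · left; exact ⟨i₀, h, hzero⟩

theorem stmt_3_aux (m k : ℕ) (hm : 0 < m) (hk : 0 < k) :
    ∃ N : ℕ, 2 * N = Nat.choose (m+k+m) m * Nat.choose (k+m) m ∧
      IsGreatest {n : ℕ | ∃ X ⊆ L m k m, Metric.diam X < Metric.diam (L m k m) ∧
        X.ncard = n} N := by
  classical
  set d := Real.sqrt (8*m) with hd
  have hLfin : (L m k m).Finite := L_finite
  have hLbd : Bornology.IsBounded (L m k m) := hLfin.isBounded
  obtain ⟨x₀, hx₀⟩ := L_nonempty hm hk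
  -- diameter of L
  have hdiamL : Metric.diam (L m k m) = d := by
    apply le_antisymm
    · exact Metric.diam_le_of_forall_dist_le (Real.sqrt_nonneg _)
        (fun x hx y hy => dist_le x y hx hy)
    · rw [hd, ← dist_neg x₀ hx₀]
      exact Metric.dist_le_diam_of_mem hLbd hx₀ (neg_mem x₀ hx₀)
  -- the extremal set
  set Xs : Set (EuclideanSpace ℝ (Fin (m+k+m))) := {x | x ∈ L m k m ∧ pos x} with hXs
  have hXsub : Xs ⊆ L m k m := fun x hx => hx.1
  have hXfin : Xs.Finite := hLfin.subset hXsub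
  have hnotboth : ∀ x ∈ Xs, -x ∉ Xs := fun x hx hnx => not_pos_neg x hx.2 hnx.2
  -- L = Xs ∪ -Xs
  have hLuni : L m k m = Xs ∪ (Neg.neg '' Xs) := by
    apply Set.Subset.antisymm
    · intro x hx
      rcases pos_or hm x hx with h|h
      · exact Or.inl ⟨hx, h⟩
      · exact Or.inr ⟨-x, ⟨neg_mem x hx, h⟩, neg_neg x⟩
    · rintro x (hx|⟨y, hy, rfl⟩)
      · exact hx.1
      · exact neg_mem y hy.1
  have hdisj : Disjoint Xs (Neg.neg '' Xs) := by
    rw [Set.disjoint_left]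
    rintro z hz ⟨w, hw, rfl⟩
    exact hnotboth w hw hz
  have hcard2 : (L m k m).ncard = 2 * Xs.ncard := by
    rw [hLuni, Set.ncard_union_eq hdisj hXfin (hXfin.image _),
      Set.ncard_image_of_injOn (neg_injective.injOn)]
    ring
  refine ⟨Xs.ncard, by rw [← hcard2, ncard_L], ?_, ?_⟩
  · -- membership
    refine ⟨Xs, hXsub, ?_, rfl⟩
    -- Xs nonempty, finite: diameter achieved
    have hXne : Xs.Nonempty := by
      rcases pos_or hm x₀ hx₀ with h|h
      · exact ⟨x₀, hx₀, h⟩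
      · exact ⟨-x₀, neg_mem x₀ hx₀, h⟩
    obtain ⟨a, ha, b, hb, hdXs⟩ : ∃ a ∈ Xs, ∃ b ∈ Xs, Metric.diam Xs ≤ dist a b := by
      set F := hXfin.toFinset with hF
      have hFne : (F ×ˢ F).Nonempty := by
        obtain ⟨z, hz⟩ := hXne
        exact ⟨(z, z), Finset.mk_mem_product (hXfin.mem_toFinset.2 hz) (hXfin.mem_toFinset.2 hz)⟩
      obtain ⟨p, hp, hsup⟩ := Finset.exists_mem_eq_sup' hFne (fun p => dist p.1 p.2)
      rw [Finset.mem_product] at hp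
      refine ⟨p.1, hXfin.mem_toFinset.1 hp.1, p.2, hXfin.mem_toFinset.1 hp.2, ?_⟩
      rw [← hsup]
      apply Metric.diam_le_of_forall_dist_le
      · rw [hsup]; exact dist_nonneg
      · intro x hx y hy
        exact Finset.le_sup' (fun p => dist p.1 p.2) (Finset.mk_mem_product (hXfin.mem_toFinset.2 hx) (hXfin.mem_toFinset.2 hy))
    have hbne : b ≠ -a := by
      rintro rfl
      exact hnotboth a ha hb
    calc Metric.diam Xs ≤ dist a b := hdXs
    _ < d := dist_lt a b (hXsub ha) (hXsub hb) hbne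
    _ = Metric.diam (L m k m) := hdiamL.symm
  · -- upper bound
    rintro n ⟨Y, hYL, hYdiam, rfl⟩
    have hYfin : Y.Finite := hLfin.subset hYL
    have hYdisj : Disjoint Y (Neg.neg '' Y) := by
      rw [Set.disjoint_left]
      rintro z hz ⟨w, hw, rfl⟩
      have : dist w (-w) ≤ Metric.diam Y :=
        Metric.dist_le_diam_of_mem hYfin.isBounded hw hz
      rw [dist_neg w (hYL hw), ← hd, ← hdiamL] at this
      exact absurd hYdiam (not_lt.2 this)
    have : 2 * Y.ncard ≤ (L m k m).ncard := by
      rw [two_mul]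
      calc Y.ncard + Y.ncard
          = (Y ∪ Neg.neg '' Y).ncard := by
            rw [Set.ncard_union_eq hYdisj hYfin (hYfin.image _),
              Set.ncard_image_of_injOn (neg_injective.injOn)]
      _ ≤ (L m k m).ncard := Set.ncard_le_ncard (by
            rintro z (hz|⟨w, hw, rfl⟩)
            · exact hYL hz
            · exact neg_mem w (hYL hw)) hLfin
    rw [hcard2] at this
    omega


end Stmt3

theorem stmt_3 (m k : ℕ) (hm : 0 < m) (hk : 0 < k) :
    ∃ N : ℕ, 2 * N = Nat.choose (m+k+m) m * Nat.choose (k+m) m ∧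
      IsGreatest {n : ℕ | ∃ X ⊆ L m k m, Metric.diam X < Metric.diam (L m k m) ∧
        X.ncard = n} N :=
  Stmt3.stmt_3_aux m k hm hk
end

section
/- Assume m ≤ l and m + k ≤ l, and set n = m+k+l. Then the maximum size of X ⊆ L_{mkl} with D(X) < D(L_{mkl}) equals binomial(n-1, m+k-1) * binomial(m+k, m). -/
open scoped Classical

namespace Stmt6Aux

open Finset

/-- The vector with `-1` on `B`, `0` on `A \ B`, `1` outside `A`. -/
noncomputable def vec {N : ℕ} (A B : Finset (Fin N)) : EuclideanSpace ℝ (Fin N) :=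
  WithLp.toLp 2 (fun i => if i ∈ B then (-1 : ℝ) else if i ∈ A then 0 else 1)

/-- non-one support -/
noncomputable def NS {N : ℕ} (x : EuclideanSpace ℝ (Fin N)) : Finset (Fin N) :=
  Finset.univ.filter (fun i => x i ≠ 1)

noncomputable def Neg {N : ℕ} (x : EuclideanSpace ℝ (Fin N)) : Finset (Fin N) :=
  Finset.univ.filter (fun i => x i = -1)

lemma vec_neg {N : ℕ} (A B : Finset (Fin N)) :
    Finset.univ.filter (fun i => vec A B i = (-1:ℝ)) = B := by
  ext i
  simp only [mem_filter, mem_univ, true_and, vec, PiLp.toLp_apply]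
  split_ifs with h1 h2
  · simp [h1]
  · constructor
    · intro h; norm_num at h
    · intro h; exact absurd h h1
  · constructor
    · intro h; norm_num at h
    · intro h; exact absurd h h1

lemma vec_zero {N : ℕ} (A B : Finset (Fin N)) :
    Finset.univ.filter (fun i => vec A B i = (0:ℝ)) = A \ B := by
  ext i
  simp only [mem_filter, mem_univ, true_and, vec, PiLp.toLp_apply, mem_sdiff]
  split_ifs with h1 h2
  · constructor
    · intro h; norm_num at h
    · rintro ⟨-, h⟩; exact absurd h1 h
  · simp [h1, h2]
  · constructor
    · intro h; norm_num at h
    · rintro ⟨h, -⟩; exact absurd h h2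

lemma vec_one {N : ℕ} (A B : Finset (Fin N)) (hBA : B ⊆ A) :
    Finset.univ.filter (fun i => vec A B i = (1:ℝ)) = Aᶜ := by
  ext i
  simp only [mem_filter, mem_univ, true_and, vec, PiLp.toLp_apply, mem_compl]
  split_ifs with h1 h2
  · constructor
    · intro h; norm_num at h
    · intro h; exact absurd (hBA h1) h
  · constructor
    · intro h; norm_num at h
    · intro h; exact absurd h2 h
  · simp [h2]

lemma vec_memL {m k l : ℕ} (A B : Finset (Fin (m+k+l))) (hA : A.card = m + k)
    (hBA : B ⊆ A) (hB : B.card = m) : vec A B ∈ L m k l := by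
  refine ⟨?_, ?_, ?_⟩
  · rw [vec_neg]; exact hB
  · rw [vec_zero, card_sdiff_of_subset hBA, hA, hB]; omega
  · rw [vec_one A B hBA, card_compl, hA, Fintype.card_fin]; omega

lemma vec_ne_one {N : ℕ} {A B : Finset (Fin N)} {i : Fin N} (h : i ∈ A) :
    vec A B i ≠ 1 := by
  simp only [vec, PiLp.toLp_apply]
  split_ifs with h1
  · norm_num
  · simp [h]

lemma NS_vec {N : ℕ} (A B : Finset (Fin N)) (hBA : B ⊆ A) : NS (vec A B) = A := by
  ext i
  simp only [NS, mem_filter, mem_univ, true_and, vec, PiLp.toLp_apply]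
  split_ifs with h1 h2
  · simp only [hBA h1, iff_true]; norm_num
  · simp only [h2, iff_true]; norm_num
  · simp only [h2, iff_false]; norm_num

lemma tri {m k l : ℕ} {x : EuclideanSpace ℝ (Fin (m+k+l))} (hx : x ∈ L m k l) :
    ∀ i, x i = -1 ∨ x i = 0 ∨ x i = 1 := by
  intro i
  by_contra hc
  push_neg at hc
  obtain ⟨h1, h2, h3⟩ := hc
  set F1 := Finset.univ.filter (fun i => x i = (-1:ℝ)) with hF1
  set F2 := Finset.univ.filter (fun i => x i = (0:ℝ)) with hF2
  set F3 := Finset.univ.filter (fun i => x i = (1:ℝ)) with hF3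
  have d12 : Disjoint F1 F2 := by
    rw [Finset.disjoint_left]; intro a ha hb
    simp only [hF1, hF2, mem_filter] at ha hb
    rw [ha.2] at hb; norm_num at hb
  have d13 : Disjoint F1 F3 := by
    rw [Finset.disjoint_left]; intro a ha hb
    simp only [hF1, hF3, mem_filter] at ha hb
    rw [ha.2] at hb; norm_num at hb
  have d23 : Disjoint F2 F3 := by
    rw [Finset.disjoint_left]; intro a ha hb
    simp only [hF2, hF3, mem_filter] at ha hb
    rw [ha.2] at hb; norm_num at hb
  have d123 : Disjoint (F1 ∪ F2) F3 := Finset.disjoint_union_left.2 ⟨d13, d23⟩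
  have hcard : ((F1 ∪ F2) ∪ F3).card = m + k + l := by
    rw [card_union_of_disjoint d123, card_union_of_disjoint d12, hx.1, hx.2.1, hx.2.2]
  have huniv : (F1 ∪ F2) ∪ F3 = Finset.univ :=
    Finset.eq_univ_of_card _ (by rw [hcard, Fintype.card_fin])
  have : i ∈ (F1 ∪ F2) ∪ F3 := huniv ▸ Finset.mem_univ i
  simp only [mem_union, hF1, hF2, hF3, mem_filter, mem_univ, true_and] at this
  tauto

lemma NS_card {m k l : ℕ} {x : EuclideanSpace ℝ (Fin (m+k+l))} (hx : x ∈ L m k l) :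
    (NS x).card = m + k := by
  have : NS x = Finset.univ.filter (fun i => x i = (-1:ℝ)) ∪
      Finset.univ.filter (fun i => x i = (0:ℝ)) := by
    ext i
    simp only [NS, mem_filter, mem_univ, true_and, mem_union]
    constructor
    · intro h
      rcases tri hx i with h'|h'|h'
      · exact Or.inl h'
      · exact Or.inr h'
      · exact absurd h' h
    · rintro (h|h) <;> rw [h] <;> norm_num
  rw [this, card_union_of_disjoint, hx.1, hx.2.1]
  rw [Finset.disjoint_left]; intro a ha hb
  simp only [mem_filter] at ha hb
  rw [ha.2] at hb; norm_num at hb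

lemma Neg_subset_NS {N : ℕ} (x : EuclideanSpace ℝ (Fin N)) : Neg x ⊆ NS x := by
  intro i hi
  simp only [Neg, NS, mem_filter, mem_univ, true_and] at hi ⊢
  rw [hi]; norm_num

lemma eq_vec {m k l : ℕ} {x : EuclideanSpace ℝ (Fin (m+k+l))} (hx : x ∈ L m k l) :
    x = vec (NS x) (Neg x) := by
  ext i
  rcases tri hx i with h|h|h <;>
    simp only [vec, PiLp.toLp_apply, Neg, NS, mem_filter, mem_univ, true_and, h] <;> norm_num

/-- the per-coordinate cost function -/
noncomputable def c (t : ℝ) : ℝ := if t = 1 then 0 else if t = 0 then 1 else 4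

lemma sum_c {m k l : ℕ} {x : EuclideanSpace ℝ (Fin (m+k+l))} (hx : x ∈ L m k l) :
    ∑ i, c (x i) = 4 * m + k := by
  have h : ∀ i, c (x i) = 4 * (if x i = (-1:ℝ) then (1:ℝ) else 0)
      + (if x i = (0:ℝ) then (1:ℝ) else 0) := by
    intro i
    rcases tri hx i with h|h|h <;> norm_num [c, h]
  rw [Finset.sum_congr rfl (fun i _ => h i), Finset.sum_add_distrib, ← Finset.mul_sum,
    Finset.sum_boole, Finset.sum_boole, hx.1, hx.2.1]

lemma sum_sq_le {m k l : ℕ} {x y : EuclideanSpace ℝ (Fin (m+k+l))}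
    (hx : x ∈ L m k l) (hy : y ∈ L m k l) :
    ∑ i, (x i - y i)^2 ≤ 8 * m + 2 * k := by
  have h : ∑ i, (x i - y i)^2 ≤ ∑ i, (c (x i) + c (y i)) := by
    apply Finset.sum_le_sum
    intro i _
    rcases tri hx i with h|h|h <;> rcases tri hy i with h'|h'|h' <;> norm_num [c, h, h']
  calc ∑ i, (x i - y i)^2 ≤ ∑ i, (c (x i) + c (y i)) := h
    _ = (4 * m + k) + (4 * m + k) := by rw [Finset.sum_add_distrib, sum_c hx, sum_c hy]
    _ = 8 * m + 2 * k := by ring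

lemma sum_sq_eq {m k l : ℕ} {x y : EuclideanSpace ℝ (Fin (m+k+l))}
    (hx : x ∈ L m k l) (hy : y ∈ L m k l) (hd : Disjoint (NS x) (NS y)) :
    ∑ i, (x i - y i)^2 = 8 * m + 2 * k := by
  have h : ∀ i, (x i - y i)^2 = c (x i) + c (y i) := by
    intro i
    have hone : x i = 1 ∨ y i = 1 := by
      by_contra hc
      push_neg at hc
      have h1 : i ∈ NS x := by simp [NS, hc.1]
      have h2 : i ∈ NS y := by simp [NS, hc.2]
      exact Finset.disjoint_left.1 hd h1 h2
    rcases hone with h|h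
    · rcases tri hy i with h'|h'|h' <;> norm_num [c, h, h']
    · rcases tri hx i with h'|h'|h' <;> norm_num [c, h, h']
  calc ∑ i, (x i - y i)^2 = ∑ i, (c (x i) + c (y i)) :=
        Finset.sum_congr rfl (fun i _ => h i)
    _ = (4 * m + k) + (4 * m + k) := by rw [Finset.sum_add_distrib, sum_c hx, sum_c hy]
    _ = 8 * m + 2 * k := by ring

lemma sum_sq_lt {m k l : ℕ} {x y : EuclideanSpace ℝ (Fin (m+k+l))}
    (hx : x ∈ L m k l) (hy : y ∈ L m k l) (j : Fin (m+k+l))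
    (hjx : x j ≠ 1) (hjy : y j ≠ 1) :
    ∑ i, (x i - y i)^2 ≤ 8 * m + 2 * k - 1 := by
  have h : ∑ i, (x i - y i)^2 ≤
      ∑ i, (c (x i) + c (y i) - if i = j then 1 else 0) := by
    apply Finset.sum_le_sum
    intro i _
    by_cases hij : i = j
    · subst hij
      simp only [if_pos rfl]
      rcases tri hx i with h|h|h <;> rcases tri hy i with h'|h'|h' <;>
        first
          | (exact absurd h hjx)
          | (exact absurd h' hjy)
          | norm_num [c, h, h']
    · simp only [if_neg hij, sub_zero]
      rcases tri hx i with h|h|h <;> rcases tri hy i with h'|h'|h' <;> norm_num [c, h, h']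
  have h2 : ∑ i, (c (x i) + c (y i) - if i = j then (1:ℝ) else 0)
      = (4 * m + k) + (4 * m + k) - 1 := by
    rw [Finset.sum_sub_distrib, Finset.sum_add_distrib, sum_c hx, sum_c hy]
    congr 1
    simp
  linarith [h, h2.le, h2.ge]

lemma dist_sqrt {N : ℕ} (x y : EuclideanSpace ℝ (Fin N)) :
    dist x y = Real.sqrt (∑ i, (x i - y i)^2) := by
  rw [EuclideanSpace.dist_eq]
  congr 1
  refine Finset.sum_congr rfl (fun i _ => ?_)
  rw [Real.dist_eq, sq_abs]

lemma distL_le {m k l : ℕ} {x y : EuclideanSpace ℝ (Fin (m+k+l))}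
    (hx : x ∈ L m k l) (hy : y ∈ L m k l) :
    dist x y ≤ Real.sqrt (8 * m + 2 * k) := by
  rw [dist_sqrt]
  exact Real.sqrt_le_sqrt (sum_sq_le hx hy)

lemma distL_eq {m k l : ℕ} {x y : EuclideanSpace ℝ (Fin (m+k+l))}
    (hx : x ∈ L m k l) (hy : y ∈ L m k l) (hd : Disjoint (NS x) (NS y)) :
    dist x y = Real.sqrt (8 * m + 2 * k) := by
  rw [dist_sqrt, sum_sq_eq hx hy hd]

lemma distL_lt {m k l : ℕ} {x y : EuclideanSpace ℝ (Fin (m+k+l))}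
    (hx : x ∈ L m k l) (hy : y ∈ L m k l) (j : Fin (m+k+l))
    (hjx : x j ≠ 1) (hjy : y j ≠ 1) :
    dist x y ≤ Real.sqrt (8 * m + 2 * k - 1) := by
  rw [dist_sqrt]
  exact Real.sqrt_le_sqrt (sum_sq_lt hx hy j hjx hjy)

lemma boundedL (m k l : ℕ) : Bornology.IsBounded (L m k l) :=
  Metric.isBounded_iff.2 ⟨Real.sqrt (8 * m + 2 * k), fun _ hx _ hy => distL_le hx hy⟩

/-- counting `Fin` elements whose value satisfies a predicate -/
lemma card_filter_val {N : ℕ} (p : ℕ → Prop) [DecidablePred p] :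
    (Finset.univ.filter (fun i : Fin N => p i.val)).card
      = ((Finset.range N).filter p).card := by
  rw [← Finset.card_attachFin (((Finset.range N).filter p))
    (fun m hm => Finset.mem_range.1 (Finset.mem_filter.1 hm).1)]
  congr 1
  ext i
  simp [Finset.mem_attachFin, i.isLt]

lemma card_filter_lt {N a : ℕ} (ha : a ≤ N) :
    (Finset.univ.filter (fun i : Fin N => i.val < a)).card = a := by
  rw [card_filter_val (fun v => v < a)]
  have : (Finset.range N).filter (fun v => v < a) = Finset.range a := by
    ext v; simp only [Finset.mem_filter, Finset.mem_range]; omega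
  rw [this, Finset.card_range]

lemma card_filter_Ico {N a b : ℕ} (hb : b ≤ N) :
    (Finset.univ.filter (fun i : Fin N => a ≤ i.val ∧ i.val < b)).card = b - a := by
  rw [card_filter_val (fun v => a ≤ v ∧ v < b)]
  have : (Finset.range N).filter (fun v => a ≤ v ∧ v < b) = Finset.Ico a b := by
    ext v; simp only [Finset.mem_filter, Finset.mem_range, Finset.mem_Ico]; omega
  rw [this, Nat.card_Ico]

lemma diam_L {m k l : ℕ} (hm : 0 < m) (hk : 0 < k) (hmkl : m + k ≤ l) :
    Metric.diam (L m k l) = Real.sqrt (8 * m + 2 * k) := by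
  have hN : 2 * (m + k) ≤ m + k + l := by omega
  -- the extremal pair
  set A0 : Finset (Fin (m+k+l)) := Finset.univ.filter (fun i => i.val < m + k) with hA0
  set B0 : Finset (Fin (m+k+l)) := Finset.univ.filter (fun i => i.val < m) with hB0
  set A1 : Finset (Fin (m+k+l)) :=
    Finset.univ.filter (fun i => m + k ≤ i.val ∧ i.val < 2 * (m + k)) with hA1
  set B1 : Finset (Fin (m+k+l)) :=
    Finset.univ.filter (fun i => m + k ≤ i.val ∧ i.val < 2 * m + k) with hB1
  have hA0c : A0.card = m + k := card_filter_lt (by omega)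
  have hB0c : B0.card = m := card_filter_lt (by omega)
  have hA1c : A1.card = m + k := by rw [hA1, card_filter_Ico (by omega)]; omega
  have hB1c : B1.card = m := by rw [hB1, card_filter_Ico (by omega)]; omega
  have hB0A0 : B0 ⊆ A0 := by
    intro i hi
    simp only [hB0, hA0, Finset.mem_filter, Finset.mem_univ, true_and] at hi ⊢; omega
  have hB1A1 : B1 ⊆ A1 := by
    intro i hi
    simp only [hB1, hA1, Finset.mem_filter, Finset.mem_univ, true_and] at hi ⊢; omega
  have hdisj : Disjoint A0 A1 := by
    rw [Finset.disjoint_left]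
    intro a ha hb
    simp only [hA0, hA1, Finset.mem_filter] at ha hb
    omega
  have hx0 : vec A0 B0 ∈ L m k l := vec_memL A0 B0 hA0c hB0A0 hB0c
  have hy0 : vec A1 B1 ∈ L m k l := vec_memL A1 B1 hA1c hB1A1 hB1c
  refine le_antisymm
    (Metric.diam_le_of_forall_dist_le (Real.sqrt_nonneg _) (fun x hx y hy => distL_le hx hy))
    ?_
  have := Metric.dist_le_diam_of_mem (boundedL m k l) hx0 hy0
  rwa [distL_eq hx0 hy0 (by rwa [NS_vec A0 B0 hB0A0, NS_vec A1 B1 hB1A1])] at this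

/-- number of `r`-subsets containing a fixed element -/
lemma card_powersetCard_filter_mem {N : ℕ} (i0 : Fin N) (r : ℕ) (hr : 0 < r) :
    ((Finset.univ.powersetCard r).filter (fun A : Finset (Fin N) => i0 ∈ A)).card
      = (N - 1).choose (r - 1) := by
  have h := Finset.card_powersetCard (r - 1) ((Finset.univ : Finset (Fin N)).erase i0)
  rw [Finset.card_erase_of_mem (Finset.mem_univ i0), Finset.card_univ, Fintype.card_fin] at h
  rw [← h]
  apply Finset.card_bij (fun A _ => A.erase i0)
  · intro A hA
    simp only [Finset.mem_filter, Finset.mem_powersetCard] at hA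
    rw [Finset.mem_powersetCard]
    refine ⟨Finset.erase_subset_erase _ hA.1.1, ?_⟩
    rw [Finset.card_erase_of_mem hA.2, hA.1.2]
  · intro A hA B hB hAB
    simp only [Finset.mem_filter] at hA hB
    rw [← Finset.insert_erase hA.2, ← Finset.insert_erase hB.2, hAB]
  · intro B hB
    rw [Finset.mem_powersetCard] at hB
    have hi0B : i0 ∉ B := fun h => (Finset.mem_erase.1 (hB.1 h)).1 rfl
    refine ⟨insert i0 B, ?_, ?_⟩
    · simp only [Finset.mem_filter, Finset.mem_powersetCard]
      refine ⟨⟨Finset.subset_univ _, ?_⟩, Finset.mem_insert_self _ _⟩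
      rw [Finset.card_insert_of_notMem hi0B, hB.2]
      omega
    · rw [Finset.erase_insert hi0B]

end Stmt6Aux

theorem stmt_6 (m k l : ℕ) (hm : 0 < m) (hk : 0 < k) (hl : 0 < l)
    (hml : m ≤ l) (hmkl : m + k ≤ l) :
    IsGreatest {n : ℕ | ∃ X ⊆ L m k l, Metric.diam X < Metric.diam (L m k l) ∧
        X.ncard = n}
      (Nat.choose (m+k+l-1) (m+k-1) * Nat.choose (m+k) m) := by
  classical
  open Finset Stmt6Aux in
  have hdiam : Metric.diam (L m k l) = Real.sqrt (8 * m + 2 * k) :=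
    Stmt6Aux.diam_L hm hk hmkl
  have hsqrt_lt : Real.sqrt (8 * m + 2 * k - 1) < Real.sqrt (8 * m + 2 * k) := by
    have hm1 : (1:ℝ) ≤ m := by exact_mod_cast hm
    have hk0 : (0:ℝ) ≤ k := by positivity
    apply Real.sqrt_lt_sqrt <;> linarith
  set i0 : Fin (m+k+l) := ⟨0, by omega⟩ with hi0
  constructor
  · -- membership : the construction
    set T : Finset ((_ : Finset (Fin (m+k+l))) × Finset (Fin (m+k+l))) :=
      ((Finset.univ.powersetCard (m+k)).filter (fun A => i0 ∈ A)).sigma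
        (fun A => A.powersetCard m) with hT
    set Xf : Finset (EuclideanSpace ℝ (Fin (m+k+l))) :=
      T.image (fun p => Stmt6Aux.vec p.1 p.2) with hXf
    have hmemT : ∀ p ∈ T, p.2 ⊆ p.1 ∧ p.1.card = m + k ∧ p.2.card = m ∧ i0 ∈ p.1 := by
      rintro ⟨A, B⟩ hp
      simp only [hT, Finset.mem_sigma, Finset.mem_filter, Finset.mem_powersetCard] at hp
      exact ⟨hp.2.1, hp.1.1.2, hp.2.2, hp.1.2⟩
    have hXfL : ∀ x ∈ Xf, x ∈ L m k l := by
      intro x hx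
      rw [hXf, Finset.mem_image] at hx
      obtain ⟨p, hp, rfl⟩ := hx
      obtain ⟨h1, h2, h3, _⟩ := hmemT p hp
      exact Stmt6Aux.vec_memL _ _ h2 h1 h3
    have hXfne1 : ∀ x ∈ Xf, x i0 ≠ 1 := by
      intro x hx
      rw [hXf, Finset.mem_image] at hx
      obtain ⟨p, hp, rfl⟩ := hx
      exact Stmt6Aux.vec_ne_one (hmemT p hp).2.2.2
    refine ⟨(Xf : Set (EuclideanSpace ℝ (Fin (m+k+l)))), fun x hx => hXfL x hx, ?_, ?_⟩
    · rw [hdiam]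
      refine lt_of_le_of_lt (Metric.diam_le_of_forall_dist_le (Real.sqrt_nonneg _) ?_) hsqrt_lt
      intro x hx y hy
      exact Stmt6Aux.distL_lt (hXfL x hx) (hXfL y hy) i0 (hXfne1 x hx) (hXfne1 y hy)
    · rw [Set.ncard_coe_finset, hXf, Finset.card_image_of_injOn, hT, Finset.card_sigma]
      · have hsum : ∀ A ∈ (Finset.univ.powersetCard (m+k)).filter
            (fun A : Finset (Fin (m+k+l)) => i0 ∈ A),
            (A.powersetCard m).card = (m+k).choose m := by
          intro A hA
          simp only [Finset.mem_filter, Finset.mem_powersetCard] at hA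
          rw [Finset.card_powersetCard, hA.1.2]
        rw [Finset.sum_congr rfl hsum, Finset.sum_const, smul_eq_mul,
          Stmt6Aux.card_powersetCard_filter_mem i0 (m+k) (by omega)]
      · rintro ⟨A, B⟩ hp ⟨A', B'⟩ hp' heq
        obtain ⟨h1, h2, h3, _⟩ := hmemT _ (Finset.mem_coe.1 hp)
        obtain ⟨h1', h2', h3', _⟩ := hmemT _ (Finset.mem_coe.1 hp')
        have heq' : Stmt6Aux.vec A B = Stmt6Aux.vec A' B' := heq
        have hA : A = A' := by
          rw [← Stmt6Aux.NS_vec A B h1, ← Stmt6Aux.NS_vec A' B' h1', heq']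
        have hB : B = B' := by
          rw [← Stmt6Aux.vec_neg A B, ← Stmt6Aux.vec_neg A' B', heq']
        subst hA; subst hB; rfl
  · -- upper bound
    rintro nn ⟨X, hXL, hXd, rfl⟩
    have hXfin : X.Finite := by
      have hinj : Set.InjOn (fun x => (Stmt6Aux.NS x, Stmt6Aux.Neg x)) X := by
        intro x hx y hy hxy
        have h1 := Stmt6Aux.eq_vec (hXL hx)
        have h2 := Stmt6Aux.eq_vec (hXL hy)
        simp only [Prod.mk.injEq] at hxy
        rw [h1, h2, hxy.1, hxy.2]
      exact Set.Finite.of_finite_image (Set.toFinite _) hinj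
    have hXb : Bornology.IsBounded X := hXfin.isBounded
    set Xs := hXfin.toFinset with hXs
    have hXsL : ∀ x ∈ Xs, x ∈ L m k l := fun x hx => hXL (hXfin.mem_toFinset.1 hx)
    set 𝒜 : Finset (Finset (Fin (m+k+l))) := Xs.image Stmt6Aux.NS with h𝒜
    have hsized : (𝒜 : Set (Finset (Fin (m+k+l)))).Sized (m+k) := by
      intro A hA
      simp only [h𝒜, Finset.coe_image, Set.mem_image, Finset.mem_coe] at hA
      obtain ⟨x, hx, rfl⟩ := hA
      exact Stmt6Aux.NS_card (hXsL x hx)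
    have hint : (𝒜 : Set (Finset (Fin (m+k+l)))).Intersecting := by
      intro A hA B hB hdisj
      simp only [h𝒜, Finset.coe_image, Set.mem_image, Finset.mem_coe] at hA hB
      obtain ⟨x, hx, rfl⟩ := hA
      obtain ⟨y, hy, rfl⟩ := hB
      have heq : dist x y = Real.sqrt (8 * m + 2 * k) :=
        Stmt6Aux.distL_eq (hXsL x hx) (hXsL y hy) hdisj
      have hle : dist x y ≤ Metric.diam X :=
        Metric.dist_le_diam_of_mem hXb (hXfin.mem_toFinset.1 hx) (hXfin.mem_toFinset.1 hy)
      rw [heq, ← hdiam] at hle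
      exact absurd (lt_of_lt_of_le hXd hle) (lt_irrefl _)
    have hEKR : 𝒜.card ≤ (m+k+l-1).choose (m+k-1) :=
      Finset.erdos_ko_rado hint hsized (by
        rw [Nat.le_div_iff_mul_le (by norm_num)]
        omega)
    have hfiber : Xs.card ≤ (m+k).choose m * 𝒜.card := by
      apply Finset.card_le_mul_card_image
      intro A hA
      have hAcard : A.card = m + k := hsized (Finset.mem_coe.2 hA)
      have : (Xs.filter (fun x => Stmt6Aux.NS x = A)).card ≤ (A.powersetCard m).card := by
        apply Finset.card_le_card_of_injOn Stmt6Aux.Neg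
        · intro x hx
          simp only [Finset.mem_coe, Finset.mem_filter] at hx
          rw [Finset.mem_coe, Finset.mem_powersetCard]
          exact ⟨hx.2 ▸ Stmt6Aux.Neg_subset_NS x, (hXsL x hx.1).1⟩
        · intro x hx y hy hxy
          simp only [Finset.coe_filter, Set.mem_setOf_eq] at hx hy
          have h1 := Stmt6Aux.eq_vec (hXsL x hx.1)
          have h2 := Stmt6Aux.eq_vec (hXsL y hy.1)
          rw [h1, h2, hx.2, hy.2, hxy]
      rw [Finset.card_powersetCard, hAcard] at this
      exact this
    have hfin : X.ncard = Xs.card := Set.ncard_eq_toFinset_card X hXfin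
    rw [hfin]
    calc Xs.card ≤ (m+k).choose m * 𝒜.card := hfiber
      _ ≤ (m+k).choose m * (m+k+l-1).choose (m+k-1) :=
          Nat.mul_le_mul_left _ hEKR
      _ = (m+k+l-1).choose (m+k-1) * (m+k).choose m := Nat.mul_comm _ _
end

section
/- Assume m + k ≤ l. Two vectors x, y ∈ L_{mkl} are at distance D(L_{mkl}) if and only if the supports of their non-positive entries are disjoint, i.e., {i : x_i ∈ {-1,0}} ∩ {i : y_i ∈ {-1,0}} = ∅. -/
open scoped Classical

lemma tri {m k l : ℕ} (x : EuclideanSpace ℝ (Fin (m+k+l))) (hx : x ∈ L m k l) :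
    ∀ i, x i = -1 ∨ x i = 0 ∨ x i = 1 := by
  obtain ⟨h1, h2, h3⟩ := hx
  intro i
  by_contra h
  push_neg at h
  obtain ⟨e1, e2, e3⟩ := h
  set A := Finset.univ.filter (fun j => x j = (-1:ℝ)) with hA
  set B := Finset.univ.filter (fun j => x j = (0:ℝ)) with hB
  set C := Finset.univ.filter (fun j => x j = (1:ℝ)) with hC
  have hAB : Disjoint A B := by
    simp only [Finset.disjoint_left, hA, hB, Finset.mem_filter, Finset.mem_univ, true_and]
    intro a ha hb; rw [ha] at hb; norm_num at hb
  have hAC : Disjoint A C := by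
    simp only [Finset.disjoint_left, hA, hC, Finset.mem_filter, Finset.mem_univ, true_and]
    intro a ha hb; rw [ha] at hb; norm_num at hb
  have hBC : Disjoint B C := by
    simp only [Finset.disjoint_left, hB, hC, Finset.mem_filter, Finset.mem_univ, true_and]
    intro a ha hb; rw [ha] at hb; norm_num at hb
  have hcard : (A ∪ B ∪ C).card = m + k + l := by
    rw [Finset.card_union_of_disjoint (by exact Finset.disjoint_union_left.mpr ⟨hAC, hBC⟩),
      Finset.card_union_of_disjoint hAB, h1, h2, h3]
  have huniv : A ∪ B ∪ C = Finset.univ := by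
    apply Finset.eq_univ_of_card
    rw [hcard, Fintype.card_fin]
  have : i ∈ A ∪ B ∪ C := huniv ▸ Finset.mem_univ i
  simp only [Finset.mem_union, hA, hB, hC, Finset.mem_filter, Finset.mem_univ, true_and] at this
  tauto

lemma sum_boole_card {n : ℕ} (p : Fin n → Prop) [DecidablePred p] :
    ∑ i, (if p i then (1:ℝ) else 0) = (Finset.univ.filter p).card := by
  simp [Finset.sum_boole]

lemma sum_sq {m k l : ℕ} (x : EuclideanSpace ℝ (Fin (m+k+l))) (hx : x ∈ L m k l) :
    ∑ i, x i ^ 2 = (m:ℝ) + l := by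
  have h := tri x hx
  have hpt : ∀ i, x i ^ 2 = (if x i = (-1:ℝ) then (1:ℝ) else 0) + (if x i = (1:ℝ) then 1 else 0) := by
    intro i; rcases h i with h|h|h <;> rw [h] <;> norm_num
  rw [Finset.sum_congr rfl (fun i _ => hpt i), Finset.sum_add_distrib,
    sum_boole_card, sum_boole_card, hx.1, hx.2.2]

lemma main_bound {m k l : ℕ} (x y : EuclideanSpace ℝ (Fin (m+k+l)))
    (hx : x ∈ L m k l) (hy : y ∈ L m k l) :
    ∑ i, (x i - y i)^2 ≤ 6*(m:ℝ) - 2*l +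
      2*((Finset.univ.filter (fun i => x i = (1:ℝ)) ∪
          Finset.univ.filter (fun i => y i = (1:ℝ))).card) := by
  set A := Finset.univ.filter (fun i => x i = (1:ℝ)) with hA
  set B := Finset.univ.filter (fun i => y i = (1:ℝ)) with hB
  have hexp : ∑ i, (x i - y i)^2 = (∑ i, x i ^2) + (∑ i, y i ^2) - 2 * ∑ i, x i * y i := by
    rw [← Finset.sum_add_distrib, Finset.mul_sum, ← Finset.sum_sub_distrib]
    exact Finset.sum_congr rfl (fun i _ => by ring)
  have hS : ((A ∩ B).card : ℝ) - 2*m ≤ ∑ i, x i * y i := by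
    have hpt : ∀ i, (if x i = (1:ℝ) ∧ y i = (1:ℝ) then (1:ℝ) else 0)
        - (if x i = (-1:ℝ) then 1 else 0) - (if y i = (-1:ℝ) then 1 else 0) ≤ x i * y i := by
      intro i
      rcases tri x hx i with h1|h1|h1 <;> rcases tri y hy i with h2|h2|h2 <;>
        rw [h1, h2] <;> norm_num
    calc ((A ∩ B).card : ℝ) - 2*m
        = ∑ i, ((if x i = (1:ℝ) ∧ y i = (1:ℝ) then (1:ℝ) else 0)
            - (if x i = (-1:ℝ) then 1 else 0) - (if y i = (-1:ℝ) then 1 else 0)) := by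
          rw [Finset.sum_sub_distrib, Finset.sum_sub_distrib, sum_boole_card, sum_boole_card,
            sum_boole_card, hx.1, hy.1, ← Finset.filter_and]
          ring
      _ ≤ ∑ i, x i * y i := Finset.sum_le_sum (fun i _ => hpt i)
  have hcards : ((A ∩ B).card : ℝ) + (A ∪ B).card = (l : ℝ) + l := by
    have h := Finset.card_inter_add_card_union A B
    rw [show A.card = l from hx.2.2, show B.card = l from hy.2.2] at h
    exact_mod_cast h
  rw [hexp, sum_sq x hx, sum_sq y hy]
  linarith

lemma sum_eq_of_disj {m k l : ℕ} (x y : EuclideanSpace ℝ (Fin (m+k+l)))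
    (hx : x ∈ L m k l) (hy : y ∈ L m k l) (h : ∀ i, x i = 1 ∨ y i = 1) :
    ∑ i, (x i - y i)^2 = 8*(m:ℝ) + 2*k := by
  have hpt : ∀ i, (x i - y i)^2 = 4*(if x i = (-1:ℝ) then (1:ℝ) else 0)
      + (if x i = (0:ℝ) then 1 else 0) + 4*(if y i = (-1:ℝ) then 1 else 0)
      + (if y i = (0:ℝ) then 1 else 0) := by
    intro i
    rcases h i with h1|h1
    · rcases tri y hy i with h2|h2|h2 <;> rw [h1, h2] <;> norm_num
    · rcases tri x hx i with h2|h2|h2 <;> rw [h1, h2] <;> norm_num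
  calc ∑ i, (x i - y i)^2 = ∑ i, (4*(if x i = (-1:ℝ) then (1:ℝ) else 0)
      + (if x i = (0:ℝ) then 1 else 0) + 4*(if y i = (-1:ℝ) then 1 else 0)
      + (if y i = (0:ℝ) then 1 else 0)) := Finset.sum_congr rfl (fun i _ => hpt i)
    _ = 4*(m:ℝ) + k + 4*m + k := by
        rw [Finset.sum_add_distrib, Finset.sum_add_distrib, Finset.sum_add_distrib,
          ← Finset.mul_sum, ← Finset.mul_sum, sum_boole_card, sum_boole_card,
          sum_boole_card, sum_boole_card, hx.1, hx.2.1, hy.1, hy.2.1]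
    _ = 8*(m:ℝ) + 2*k := by ring

lemma card_interval {n a b : ℕ} (hb : b ≤ n) :
    (Finset.univ.filter (fun i : Fin n => a ≤ i.val ∧ i.val < b)).card = b - a := by
  rw [← Finset.card_image_of_injective _ Fin.val_injective]
  have himg : (Finset.univ.filter (fun i : Fin n => a ≤ i.val ∧ i.val < b)).image Fin.val
      = Finset.Ico a b := by
    ext t
    simp only [Finset.mem_image, Finset.mem_filter, Finset.mem_univ, true_and, Finset.mem_Ico]
    constructor
    · rintro ⟨i, hi, rfl⟩; exact hi
    · rintro ⟨h1, h2⟩; exact ⟨⟨t, lt_of_lt_of_le h2 hb⟩, ⟨h1, h2⟩, rfl⟩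
  rw [himg, Nat.card_Ico]

noncomputable def xw (m k l : ℕ) : EuclideanSpace ℝ (Fin (m+k+l)) :=
  WithLp.toLp 2 (fun i : Fin (m+k+l) => if i.val < m then -1 else if i.val < m+k then 0 else 1)

noncomputable def yw (m k l : ℕ) : EuclideanSpace ℝ (Fin (m+k+l)) :=
  WithLp.toLp 2 (fun i : Fin (m+k+l) => if i.val < m+k then 1 else if i.val < m+k+m then -1
    else if i.val < m+k+m+k then 0 else 1)

lemma xw_mem (m k l : ℕ) : xw m k l ∈ L m k l := by
  refine ⟨?_, ?_, ?_⟩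
  · rw [Finset.filter_congr (q := fun i : Fin (m+k+l) => 0 ≤ i.val ∧ i.val < m)
      (fun i _ => by unfold xw; simp only [WithLp.ofLp_toLp]; split_ifs with h1 h2 <;> norm_num <;> omega),
      card_interval (by omega)]
    omega
  · rw [Finset.filter_congr (q := fun i : Fin (m+k+l) => m ≤ i.val ∧ i.val < m+k)
      (fun i _ => by unfold xw; simp only [WithLp.ofLp_toLp]; split_ifs with h1 h2 <;> norm_num <;> omega),
      card_interval (by omega)]
    omega
  · rw [Finset.filter_congr (q := fun i : Fin (m+k+l) => m+k ≤ i.val ∧ i.val < m+k+l)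
      (fun i _ => by have := i.isLt; unfold xw; simp only [WithLp.ofLp_toLp]; split_ifs with h1 h2 <;> norm_num <;> omega),
      card_interval (by omega)]
    omega

lemma yw_mem (m k l : ℕ) (hmkl : m + k ≤ l) : yw m k l ∈ L m k l := by
  refine ⟨?_, ?_, ?_⟩
  · rw [Finset.filter_congr (q := fun i : Fin (m+k+l) => m+k ≤ i.val ∧ i.val < m+k+m)
      (fun i _ => by have := i.isLt; unfold yw; simp only [WithLp.ofLp_toLp]; split_ifs with h1 h2 h3 <;> norm_num <;> omega),
      card_interval (by omega)]
    omega
  · rw [Finset.filter_congr (q := fun i : Fin (m+k+l) => m+k+m ≤ i.val ∧ i.val < m+k+m+k)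
      (fun i _ => by have := i.isLt; unfold yw; simp only [WithLp.ofLp_toLp]; split_ifs with h1 h2 h3 <;> norm_num <;> omega),
      card_interval (by omega)]
    omega
  · rw [Finset.filter_congr
      (q := fun i : Fin (m+k+l) => (0 ≤ i.val ∧ i.val < m+k) ∨ (m+k+m+k ≤ i.val ∧ i.val < m+k+l))
      (fun i _ => by have := i.isLt; unfold yw; simp only [WithLp.ofLp_toLp]; split_ifs with h1 h2 h3 <;> norm_num <;> omega),
      Finset.filter_or,
      Finset.card_union_of_disjoint (by
        simp only [Finset.disjoint_left, Finset.mem_filter, Finset.mem_univ, true_and]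
        rintro a ⟨_, h1⟩ ⟨h2, _⟩; omega),
      card_interval (by omega), card_interval (by omega)]
    omega

lemma w_disj (m k l : ℕ) : ∀ i, xw m k l i = 1 ∨ yw m k l i = 1 := by
  intro i
  unfold xw yw
  simp only [WithLp.ofLp_toLp]
  by_cases h : i.val < m+k
  · right; rw [if_pos h]
  · left; rw [if_neg (by omega), if_neg h]

lemma dist_eq_sum {m k l : ℕ} (x y : EuclideanSpace ℝ (Fin (m+k+l))) :
    dist x y = Real.sqrt (∑ i, (x i - y i)^2) := by
  rw [EuclideanSpace.dist_eq]
  congr 1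
  exact Finset.sum_congr rfl (fun i _ => by rw [Real.dist_eq, sq_abs])

lemma L_bounded (m k l : ℕ) : Bornology.IsBounded (L m k l) := by
  apply (Metric.isBounded_closedBall
    (x := (0 : EuclideanSpace ℝ (Fin (m+k+l)))) (r := Real.sqrt (m+l))).subset
  intro x hx
  rw [Metric.mem_closedBall, dist_eq_sum]
  have h0 : ∑ i, (x i - (0 : EuclideanSpace ℝ (Fin (m+k+l))) i)^2 = ∑ i, x i ^2 := by
    apply Finset.sum_congr rfl; intro i _; norm_num
  rw [h0, sum_sq x hx]

lemma diam_L (m k l : ℕ) (hmkl : m + k ≤ l) :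
    Metric.diam (L m k l) = Real.sqrt (8*(m:ℝ) + 2*k) := by
  apply le_antisymm
  · apply Metric.diam_le_of_forall_dist_le (Real.sqrt_nonneg _)
    intro x hx y hy
    rw [dist_eq_sum]
    apply Real.sqrt_le_sqrt
    have hmb := main_bound x y hx hy
    have hcard : (((Finset.univ.filter (fun i => x i = (1:ℝ)) ∪
        Finset.univ.filter (fun i => y i = (1:ℝ))).card : ℝ)) ≤ ((m+k+l : ℕ) : ℝ) := by
      exact_mod_cast le_trans (Finset.card_le_card (Finset.subset_univ _))
        (le_of_eq (by simp))
    push_cast at hcard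
    linarith
  · have hd := dist_eq_sum (xw m k l) (yw m k l)
    rw [sum_eq_of_disj _ _ (xw_mem m k l) (yw_mem m k l hmkl) (w_disj m k l)] at hd
    rw [← hd]
    exact Metric.dist_le_diam_of_mem (L_bounded m k l) (xw_mem m k l) (yw_mem m k l hmkl)

theorem stmt_7 (m k l : ℕ) (hm : 0 < m) (hk : 0 < k) (hl : 0 < l)
    (hmkl : m + k ≤ l)
    (x y : EuclideanSpace ℝ (Fin (m+k+l))) (hx : x ∈ L m k l) (hy : y ∈ L m k l) :
    dist x y = Metric.diam (L m k l) ↔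
      {i : Fin (m+k+l) | x i = -1 ∨ x i = 0} ∩ {i | y i = -1 ∨ y i = 0} = ∅ := by
  have hsetiff : ({i : Fin (m+k+l) | x i = -1 ∨ x i = 0} ∩ {i | y i = -1 ∨ y i = 0} = ∅)
      ↔ ∀ i, x i = 1 ∨ y i = 1 := by
    rw [Set.eq_empty_iff_forall_notMem]
    constructor
    · intro h i
      have hh := h i
      simp only [Set.mem_inter_iff, Set.mem_setOf_eq] at hh
      rcases tri x hx i with h1|h1|h1 <;> rcases tri y hy i with h2|h2|h2 <;> tauto
    · intro h i
      simp only [Set.mem_inter_iff, Set.mem_setOf_eq]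
      rintro ⟨ha, hb⟩
      rcases h i with h'|h'
      · rcases ha with a|a <;> rw [h'] at a <;> norm_num at a
      · rcases hb with a|a <;> rw [h'] at a <;> norm_num at a
  rw [diam_L m k l hmkl, hsetiff, dist_eq_sum]
  constructor
  · intro hEq
    have h1 : (0:ℝ) ≤ ∑ i, (x i - y i)^2 := Finset.sum_nonneg (fun i _ => sq_nonneg _)
    have h2 : (0:ℝ) ≤ 8*(m:ℝ) + 2*k := by positivity
    have hsum : ∑ i, (x i - y i)^2 = 8*(m:ℝ) + 2*k := by
      have := congrArg (·^2) hEq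
      simpa [Real.sq_sqrt h1, Real.sq_sqrt h2] using this
    by_contra hcon
    push_neg at hcon
    obtain ⟨i0, hx0, hy0⟩ := hcon
    have hmb := main_bound x y hx hy
    set U := Finset.univ.filter (fun i => x i = (1:ℝ)) ∪
      Finset.univ.filter (fun i => y i = (1:ℝ)) with hU
    have hnm : i0 ∉ U := by
      simp only [hU, Finset.mem_union, Finset.mem_filter, Finset.mem_univ, true_and]
      tauto
    have hlt : U.card < m+k+l := by
      have h3 : U ≠ Finset.univ := fun h => hnm (h ▸ Finset.mem_univ i0)
      have := Finset.card_lt_card (Finset.ssubset_univ_iff.mpr h3)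
      simpa using this
    have hltR : (U.card : ℝ) ≤ (m:ℝ)+k+l-1 := by
      have : (U.card : ℝ) + 1 ≤ ((m+k+l : ℕ) : ℝ) := by exact_mod_cast hlt
      push_cast at this
      linarith
    rw [hsum] at hmb
    linarith
  · intro h
    rw [sum_eq_of_disj x y hx hy h]
end

section
/- The diameter graph of L_{112} ⊂ R^4 (the 12 vectors with one entry -1, one entry 0, two entries 1, with edges between pairs at the maximum distance sqrt(10)) is isomorphic to the disjoint union of three 4-cycles. -/
open scoped Classical

/-- The diameter graph of a set `X ⊆ ℝ^n`: vertices are points of `X`, with edges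
between distinct points at distance equal to the diameter of `X`. -/
def diamGraph {n : ℕ} (X : Set (EuclideanSpace ℝ (Fin n))) : SimpleGraph X :=
  SimpleGraph.fromRel (fun x y => dist (x : EuclideanSpace ℝ (Fin n)) y = Metric.diam X)

/-- The disjoint union of three 4-cycles. -/
def threeC4 : SimpleGraph (Fin 3 × Fin 4) :=
  SimpleGraph.fromRel (fun p q => p.1 = q.1 ∧ (SimpleGraph.cycleGraph 4).Adj p.2 q.2)

/-! ### Auxiliary development -/

noncomputable def vec (a b : Fin 4) : EuclideanSpace ℝ (Fin 4) :=
  WithLp.toLp 2 (fun i => if i = a then -1 else if i = b then 0 else 1)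

lemma filter_neg_one (a b : Fin 4) :
    (Finset.univ.filter (fun i => vec a b i = (-1:ℝ))) = {a} := by
  ext i
  simp only [Finset.mem_filter, Finset.mem_univ, true_and, Finset.mem_singleton, vec]
  split_ifs with h1 h2 <;> simp_all <;> norm_num

lemma filter_zero (a b : Fin 4) (hab : a ≠ b) :
    (Finset.univ.filter (fun i => vec a b i = (0:ℝ))) = {b} := by
  ext i
  simp only [Finset.mem_filter, Finset.mem_univ, true_and, Finset.mem_singleton, vec]
  split_ifs with h1 h2 <;> simp_all <;> norm_num

lemma filter_one (a b : Fin 4) :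
    (Finset.univ.filter (fun i => vec a b i = (1:ℝ))) = {a, b}ᶜ := by
  ext i
  simp only [Finset.mem_filter, Finset.mem_univ, true_and, Finset.mem_compl,
    Finset.mem_insert, Finset.mem_singleton, vec]
  split_ifs with h1 h2 <;> simp_all <;> norm_num

lemma vec_mem (a b : Fin 4) (hab : a ≠ b) : vec a b ∈ L 1 1 2 := by
  refine ⟨?_, ?_, ?_⟩
  · rw [filter_neg_one a b]; rfl
  · rw [filter_zero a b hab]; rfl
  · rw [filter_one a b, Finset.card_compl]
    rw [Finset.card_insert_of_notMem (by simpa using hab), Finset.card_singleton]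
    rfl

lemma mem_L (x : EuclideanSpace ℝ (Fin 4)) (hx : x ∈ L 1 1 2) :
    ∃ a b : Fin 4, a ≠ b ∧ x = vec a b := by
  obtain ⟨h1, h2, h3⟩ := hx
  obtain ⟨a, ha⟩ := Finset.card_eq_one.mp h1
  obtain ⟨b, hb⟩ := Finset.card_eq_one.mp h2
  have hxa : x a = -1 := by
    have : a ∈ Finset.univ.filter (fun i => x i = (-1:ℝ)) := ha ▸ Finset.mem_singleton_self a
    simpa using this
  have hxb : x b = 0 := by
    have : b ∈ Finset.univ.filter (fun i => x i = (0:ℝ)) := hb ▸ Finset.mem_singleton_self b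
    simpa using this
  have hab : a ≠ b := by intro h; rw [h, hxb] at hxa; norm_num at hxa
  refine ⟨a, b, hab, ?_⟩
  have huniv : ∀ i : Fin 4, i ≠ a → i ≠ b → x i = 1 := by
    intro i hia hib
    by_contra hne
    have hm1 : x i ≠ -1 := by
      intro h; have : i ∈ ({a} : Finset (Fin 4)) := ha ▸ (by simp [h])
      exact hia (by simpa using this)
    have h0 : x i ≠ 0 := by
      intro h; have : i ∈ ({b} : Finset (Fin 4)) := hb ▸ (by simp [h])
      exact hib (by simpa using this)
    set s := (Finset.univ.filter (fun i => x i = (-1:ℝ))) ∪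
      (Finset.univ.filter (fun i => x i = (0:ℝ))) ∪
      (Finset.univ.filter (fun i => x i = (1:ℝ))) with hs
    have hcard : s.card = 4 := by
      rw [hs, Finset.card_union_of_disjoint, Finset.card_union_of_disjoint, h1, h2, h3]
      · simp [Finset.disjoint_filter]; intro j hj; rw [hj]; norm_num
      · rw [Finset.disjoint_union_left]
        constructor <;> (simp [Finset.disjoint_filter]; intro j hj; rw [hj]; norm_num)
    have : s = Finset.univ := Finset.eq_univ_of_card s hcard
    have hi : i ∈ s := this ▸ Finset.mem_univ i
    rw [hs] at hi
    simp only [Finset.mem_union, Finset.mem_filter, Finset.mem_univ, true_and] at hi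
    rcases hi with (h | h) | h
    · exact hm1 h
    · exact h0 h
    · exact hne h
  ext i
  by_cases hia : i = a
  · subst hia; simpa [vec] using hxa
  by_cases hib : i = b
  · subst hib; simp [vec, hia, hxb]
  · simp [vec, hia, hib, huniv i hia hib]

set_option maxHeartbeats 4000000 in
lemma dist_vec_le (a b a' b' : Fin 4) : dist (vec a b) (vec a' b') ≤ Real.sqrt 10 := by
  fin_cases a <;> fin_cases b <;> fin_cases a' <;> fin_cases b' <;>
    (rw [EuclideanSpace.dist_eq, Fin.sum_univ_four]
     apply Real.sqrt_le_sqrt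
     norm_num (config := {decide := true}) [vec, Real.dist_eq, show ((3:Fin 4)).val = 3 from rfl,
       show ((2:Fin 4)).val = 2 from rfl, show ((1:Fin 4)).val = 1 from rfl,
       show ((0:Fin 4)).val = 0 from rfl])

set_option maxHeartbeats 4000000 in
lemma dist_vec_iff (a b a' b' : Fin 4) (hab : a ≠ b) (hab' : a' ≠ b') :
    dist (vec a b) (vec a' b') = Real.sqrt 10 ↔
      (a ≠ a' ∧ a ≠ b' ∧ b ≠ a' ∧ b ≠ b') := by
  fin_cases a <;> fin_cases b <;> fin_cases a' <;> fin_cases b' <;>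
    first
      | (exact absurd rfl hab)
      | (exact absurd rfl hab')
      | (rw [EuclideanSpace.dist_eq, Real.sqrt_inj (by positivity) (by norm_num),
           Fin.sum_univ_four]
         norm_num (config := {decide := true}) [vec, Real.dist_eq, show ((3:Fin 4)).val = 3 from rfl,
           show ((2:Fin 4)).val = 2 from rfl, show ((1:Fin 4)).val = 1 from rfl,
           show ((0:Fin 4)).val = 0 from rfl])

lemma vec_inj {a b a' b' : Fin 4} (hab : a ≠ b) (h : vec a b = vec a' b') :
    a = a' ∧ b = b' := by
  have ha : vec a' b' a = -1 := by rw [← h]; simp [vec]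
  have hb : vec a' b' b = 0 := by rw [← h]; simp [vec, Ne.symm hab]
  constructor
  · by_contra hne
    simp only [vec, if_neg hne] at ha
    split_ifs at ha <;> norm_num at ha
  · have hba' : b ≠ a' := by
      intro hh; rw [hh] at hb; simp [vec] at hb
    by_contra hne
    simp only [vec, if_neg hba', if_neg hne] at hb
    norm_num at hb

def gTable : Fin 3 → Fin 4 → Fin 4 × Fin 4 :=
  ![![(0,1),(2,3),(1,0),(3,2)], ![(0,2),(1,3),(2,0),(3,1)], ![(0,3),(1,2),(3,0),(2,1)]]

def g (p : Fin 3 × Fin 4) : Fin 4 × Fin 4 := gTable p.1 p.2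

lemma g_ne : ∀ p : Fin 3 × Fin 4, (g p).1 ≠ (g p).2 := by decide

lemma g_inj : Function.Injective g := by decide

lemma g_surj : ∀ a b : Fin 4, a ≠ b → ∃ p, g p = (a, b) := by decide

noncomputable def f (p : Fin 3 × Fin 4) : ↥(L 1 1 2) :=
  ⟨vec (g p).1 (g p).2, vec_mem _ _ (g_ne p)⟩

lemma f_bij : Function.Bijective f := by
  constructor
  · intro p q h
    have h' : vec (g p).1 (g p).2 = vec (g q).1 (g q).2 := congrArg Subtype.val h
    obtain ⟨h1, h2⟩ := vec_inj (g_ne p) h'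
    exact g_inj (Prod.ext h1 h2)
  · rintro ⟨x, hx⟩
    obtain ⟨a, b, hab, rfl⟩ := mem_L x hx
    obtain ⟨p, hp⟩ := g_surj a b hab
    exact ⟨p, Subtype.ext (by rw [show (f p : EuclideanSpace ℝ (Fin 4)) =
      vec (g p).1 (g p).2 from rfl, hp])⟩

lemma L_bounded_s12 : Bornology.IsBounded (L 1 1 2) := by
  apply Set.Finite.isBounded
  apply Set.Finite.subset (Set.finite_range (fun p : Fin 4 × Fin 4 => vec p.1 p.2))
  rintro x hx
  obtain ⟨a, b, -, rfl⟩ := mem_L x hx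
  exact ⟨(a, b), rfl⟩

lemma diam_L_s12 : Metric.diam (L 1 1 2) = Real.sqrt 10 := by
  apply le_antisymm
  · apply Metric.diam_le_of_forall_dist_le (Real.sqrt_nonneg 10)
    intro x hx y hy
    obtain ⟨a, b, -, rfl⟩ := mem_L x hx
    obtain ⟨a', b', -, rfl⟩ := mem_L y hy
    exact dist_vec_le a b a' b'
  · have h1 : vec 0 1 ∈ L 1 1 2 := vec_mem 0 1 (by decide)
    have h2 : vec 2 3 ∈ L 1 1 2 := vec_mem 2 3 (by decide)
    have hd : dist (vec 0 1) (vec 2 3) = Real.sqrt 10 :=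
      (dist_vec_iff 0 1 2 3 (by decide) (by decide)).mpr (by decide)
    calc Real.sqrt 10 = dist (vec 0 1) (vec 2 3) := hd.symm
      _ ≤ Metric.diam (L 1 1 2) := Metric.dist_le_diam_of_mem L_bounded_s12 h1 h2

lemma cycle4_adj : ∀ u v : Fin 4, (SimpleGraph.cycleGraph 4).Adj u v ↔
    (u - v = 1 ∨ v - u = 1) := fun u v => SimpleGraph.cycleGraph_adj

theorem stmt_12 : Nonempty (diamGraph (L 1 1 2) ≃g threeC4) := by
  refine ⟨((⟨Equiv.ofBijective f f_bij, ?_⟩ : threeC4 ≃g diamGraph (L 1 1 2))).symm⟩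
  intro p q
  show (diamGraph (L 1 1 2)).Adj (f p) (f q) ↔ threeC4.Adj p q
  rw [diamGraph, SimpleGraph.fromRel_adj, threeC4, SimpleGraph.fromRel_adj, diam_L_s12]
  have h1 : ((f p : ↥(L 1 1 2)) : EuclideanSpace ℝ (Fin 4)) = vec (g p).1 (g p).2 := rfl
  have h2 : ((f q : ↥(L 1 1 2)) : EuclideanSpace ℝ (Fin 4)) = vec (g q).1 (g q).2 := rfl
  rw [h1, h2, dist_vec_iff _ _ _ _ (g_ne p) (g_ne q),
    dist_vec_iff _ _ _ _ (g_ne q) (g_ne p), f_bij.1.ne_iff, cycle4_adj, cycle4_adj]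
  clear h1 h2
  revert p q
  decide
end

section
/- Let X ⊆ L_{112} with D(X) < D(L_{112}). Then |X| ≤ 6. -/
open scoped Classical

/-- The vector with `-1` at `a`, `0` at `b`, `1` elsewhere. -/
noncomputable def vv (a b : Fin (1+1+2)) : EuclideanSpace ℝ (Fin (1+1+2)) :=
  WithLp.toLp 2 (fun i => if i = a then -1 else if i = b then 0 else 1)

/-- Classes of the 12 off-diagonal pairs, grouping each pair with its "antipode". -/
def cc : Fin (1+1+2) × Fin (1+1+2) → Fin 6 := fun p =>
  if p = (0,1) ∨ p = (2,3) then 0 else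
  if p = (1,0) ∨ p = (3,2) then 1 else
  if p = (0,2) ∨ p = (1,3) then 2 else
  if p = (2,0) ∨ p = (3,1) then 3 else
  if p = (0,3) ∨ p = (1,2) then 4 else 5

/-- The "antipodal" involution on off-diagonal pairs. -/
def sg : Fin (1+1+2) × Fin (1+1+2) → Fin (1+1+2) × Fin (1+1+2) := fun p =>
  if p = (0,1) then (2,3) else if p = (2,3) then (0,1) else
  if p = (1,0) then (3,2) else if p = (3,2) then (1,0) else
  if p = (0,2) then (1,3) else if p = (1,3) then (0,2) else
  if p = (2,0) then (3,1) else if p = (3,1) then (2,0) else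
  if p = (0,3) then (1,2) else if p = (1,2) then (0,3) else
  if p = (3,0) then (2,1) else if p = (2,1) then (3,0) else p

lemma cc_eq' : ∀ p q : Fin (1+1+2) × Fin (1+1+2), p.1 ≠ p.2 → q.1 ≠ q.2 →
    cc p = cc q → p = q ∨ q = sg p := by decide

lemma dist_vv (a b a' b' : Fin (1+1+2)) :
    dist (vv a b) (vv a' b') = Real.sqrt (∑ i, (vv a b i - vv a' b' i)^2) := by
  rw [EuclideanSpace.dist_eq]
  congr 1
  exact Finset.sum_congr rfl fun i _ => by rw [Real.dist_eq, sq_abs]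

lemma sum_bound (a b a' b' : Fin (1+1+2)) :
    ∑ i, (vv a b i - vv a' b' i)^2 ≤ 10 := by
  have h1 : ∀ i, (vv a b i - vv a' b' i)^2 ≤ if i = a ∨ i = a' then (4:ℝ) else 1 := by
    intro i
    simp only [vv, PiLp.toLp_apply]
    split_ifs <;> first | tauto | norm_num
  calc ∑ i, (vv a b i - vv a' b' i)^2
      ≤ ∑ i, (if i = a ∨ i = a' then (4:ℝ) else 1) :=
        Finset.sum_le_sum fun i _ => h1 i
    _ ≤ 10 := by
        have h2 : ∀ i : Fin (1+1+2), (if i = a ∨ i = a' then (4:ℝ) else 1)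
            = 3 * (if i = a ∨ i = a' then 1 else 0) + 1 := by
          intro i; split_ifs <;> norm_num
        simp only [h2]
        rw [Finset.sum_add_distrib, Finset.sum_const, ← Finset.mul_sum, Finset.sum_boole]
        have hsub : Finset.univ.filter (fun i : Fin (1+1+2) => i = a ∨ i = a') ⊆ {a, a'} := by
          intro i hi
          simp only [Finset.mem_filter] at hi
          simp [Finset.mem_insert, hi.2]
        have hc : (Finset.univ.filter (fun i : Fin (1+1+2) => i = a ∨ i = a')).card ≤ 2 :=
          (Finset.card_le_card hsub).trans ((Finset.card_insert_le _ _).trans (by simp))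
        have hcard : (Finset.univ : Finset (Fin (1+1+2))).card = 4 := by decide
        rw [hcard]
        have : ((Finset.univ.filter (fun i : Fin (1+1+2) => i = a ∨ i = a')).card : ℝ) ≤ 2 := by
          exact_mod_cast hc
        simp only [nsmul_eq_mul]
        push_cast
        linarith [this]

lemma dist_vv_le (a b a' b' : Fin (1+1+2)) :
    dist (vv a b) (vv a' b') ≤ Real.sqrt 10 :=
  (dist_vv a b a' b') ▸ Real.sqrt_le_sqrt (sum_bound a b a' b')

lemma pair_cases : ∀ p : Fin (1+1+2) × Fin (1+1+2), p.1 ≠ p.2 →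
    p = (0,1) ∨ p = (1,0) ∨ p = (0,2) ∨ p = (2,0) ∨ p = (0,3) ∨ p = (3,0) ∨
    p = (1,2) ∨ p = (2,1) ∨ p = (1,3) ∨ p = (3,1) ∨ p = (2,3) ∨ p = (3,2) := by decide

lemma sum4 (f : Fin (1+1+2) → ℝ) : ∑ i, f i = f 0 + f 1 + f 2 + f 3 :=
  Fin.sum_univ_four f

lemma dist_sg (p : Fin (1+1+2) × Fin (1+1+2)) (hp : p.1 ≠ p.2) :
    dist (vv p.1 p.2) (vv (sg p).1 (sg p).2) = Real.sqrt 10 := by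
  rcases pair_cases p hp with h|h|h|h|h|h|h|h|h|h|h|h <;> subst h <;>
    · rw [dist_vv]
      congr 1
      simp (config := { decide := true }) only [sg, vv, PiLp.toLp_apply, sum4]
      norm_num

lemma exists_rep {x : EuclideanSpace ℝ (Fin (1+1+2))} (hx : x ∈ L 1 1 2) :
    ∃ p : Fin (1+1+2) × Fin (1+1+2), p.1 ≠ p.2 ∧ x = vv p.1 p.2 := by
  obtain ⟨h1, h0, hp⟩ := hx
  obtain ⟨a, ha⟩ := Finset.card_eq_one.mp h1
  obtain ⟨b, hb⟩ := Finset.card_eq_one.mp h0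
  have hxa : x a = -1 := by
    have : a ∈ Finset.univ.filter (fun i => x i = (-1:ℝ)) := ha ▸ Finset.mem_singleton_self a
    exact (Finset.mem_filter.mp this).2
  have hxb : x b = 0 := by
    have : b ∈ Finset.univ.filter (fun i => x i = (0:ℝ)) := hb ▸ Finset.mem_singleton_self b
    exact (Finset.mem_filter.mp this).2
  have hab : a ≠ b := by
    intro h; rw [h, hxb] at hxa; norm_num at hxa
  have hSsub : Finset.univ.filter (fun i => x i = (1:ℝ)) ⊆ Finset.univ \ {a, b} := by
    intro i hi
    have hxi := (Finset.mem_filter.mp hi).2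
    simp only [Finset.mem_sdiff, Finset.mem_univ, true_and, Finset.mem_insert,
      Finset.mem_singleton]
    push_neg
    constructor
    · intro h; rw [h, hxa] at hxi; norm_num at hxi
    · intro h; rw [h, hxb] at hxi; norm_num at hxi
  have hcard : (Finset.univ \ ({a, b} : Finset (Fin (1+1+2)))).card = 2 := by
    rw [Finset.card_sdiff_of_subset (Finset.subset_univ _), Finset.card_pair hab]
    rfl
  have hS : Finset.univ.filter (fun i => x i = (1:ℝ)) = Finset.univ \ {a, b} :=
    Finset.eq_of_subset_of_card_le hSsub (by rw [hcard, hp])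
  refine ⟨(a, b), hab, PiLp.ext fun i => ?_⟩
  simp only [vv, PiLp.toLp_apply]
  split_ifs with h1' h2'
  · rw [h1']; exact hxa
  · rw [h2']; exact hxb
  · have : i ∈ Finset.univ \ ({a, b} : Finset (Fin (1+1+2))) := by
      simp [Finset.mem_sdiff, Finset.mem_insert, h1', h2']
    rw [← hS] at this
    exact (Finset.mem_filter.mp this).2

theorem stmt_13 (X : Set (EuclideanSpace ℝ (Fin (1+1+2)))) (hX : X ⊆ L 1 1 2)
    (hD : Metric.diam X < Metric.diam (L 1 1 2)) : X.ncard ≤ 6 := by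
  classical
  have hrep : ∀ x ∈ X, ∃ p : Fin (1+1+2) × Fin (1+1+2), p.1 ≠ p.2 ∧ x = vv p.1 p.2 :=
    fun x hx => exists_rep (hX hx)
  -- X is bounded
  have hLsub : L 1 1 2 ⊆ Set.range (fun p : Fin (1+1+2) × Fin (1+1+2) => vv p.1 p.2) := by
    intro x hx
    obtain ⟨p, _, hp2⟩ := exists_rep hx
    exact ⟨p, hp2.symm⟩
  have hbX : Bornology.IsBounded X :=
    ((Set.finite_range _).isBounded.subset hLsub).subset hX
  -- diam L ≤ √10
  have hdiamL : Metric.diam (L 1 1 2) ≤ Real.sqrt 10 := by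
    apply Metric.diam_le_of_forall_dist_le (Real.sqrt_nonneg 10)
    intro x hx y hy
    obtain ⟨p, _, hp2⟩ := exists_rep hx
    obtain ⟨q, _, hq2⟩ := exists_rep hy
    rw [hp2, hq2]
    exact dist_vv_le _ _ _ _
  -- no antipodal pair inside X
  have hkey : ∀ p : Fin (1+1+2) × Fin (1+1+2), p.1 ≠ p.2 →
      vv p.1 p.2 ∈ X → vv (sg p).1 (sg p).2 ∈ X → False := by
    intro p hp h1 h2
    have h3 : Real.sqrt 10 ≤ Metric.diam X := by
      rw [← dist_sg p hp]
      exact Metric.dist_le_diam_of_mem hbX h1 h2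
    have h4 : Metric.diam X < Real.sqrt 10 := lt_of_lt_of_le hD hdiamL
    linarith
  -- injection into Fin 6
  set f : EuclideanSpace ℝ (Fin (1+1+2)) → Fin 6 := fun x =>
    if h : ∃ p : Fin (1+1+2) × Fin (1+1+2), p.1 ≠ p.2 ∧ x = vv p.1 p.2 then cc h.choose
    else 0 with hf
  have hinj : Set.InjOn f X := by
    intro x hx y hy hfeq
    have hxr := hrep x hx
    have hyr := hrep y hy
    rw [hf] at hfeq
    simp only [dif_pos hxr, dif_pos hyr] at hfeq
    obtain ⟨hp1, hp2⟩ := hxr.choose_spec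
    obtain ⟨hq1, hq2⟩ := hyr.choose_spec
    rcases cc_eq' _ _ hp1 hq1 hfeq with h | h
    · rw [hp2, hq2, h]
    · exfalso
      apply hkey hxr.choose hp1
      · rw [← hp2]; exact hx
      · rw [← h, ← hq2]; exact hy
  calc X.ncard = (f '' X).ncard := (Set.ncard_image_of_injOn hinj).symm
    _ ≤ (Set.univ : Set (Fin 6)).ncard :=
        Set.ncard_le_ncard (Set.subset_univ _) Set.finite_univ
    _ = 6 := by simp [Set.ncard_univ]
end

section
/- Let X ⊆ L_{122} with D(X) < D(L_{122}). Then |X| ≤ 12. -/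
open scoped Classical

/-! ### Auxiliary material: integer coding of the 30 points of `L 1 2 2` -/

abbrev V3 := Fin 5 → Fin 3

instance (priority := 2000) : DecidableEq V3 := Fintype.decidablePiFintype

/-- decode a digit: `0 ↦ -1`, `1 ↦ 0`, `2 ↦ 1`. -/
def val : Fin 3 → ℤ := ![-1, 0, 1]

/-- decode a coded vector into Euclidean space. -/
noncomputable def toR (w : V3) : EuclideanSpace ℝ (Fin 5) :=
  WithLp.toLp 2 (fun i => ((val (w i) : ℤ) : ℝ))

/-- squared distance between coded vectors. -/
def d2 (a b : V3) : ℤ := ∑ i, (val (a i) - val (b i)) * (val (a i) - val (b i))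

/-- the 30 coded vectors of `L 1 2 2`. -/
def Sz : Finset V3 := {![0, 2, 2, 1, 1], ![0, 2, 1, 2, 1], ![0, 2, 1, 1, 2], ![0, 1, 2, 2, 1],
  ![0, 1, 2, 1, 2], ![0, 1, 1, 2, 2], ![2, 0, 2, 1, 1], ![2, 0, 1, 2, 1], ![2, 0, 1, 1, 2],
  ![1, 0, 2, 2, 1], ![1, 0, 2, 1, 2], ![1, 0, 1, 2, 2], ![2, 2, 0, 1, 1], ![2, 1, 0, 2, 1],
  ![2, 1, 0, 1, 2], ![1, 2, 0, 2, 1], ![1, 2, 0, 1, 2], ![1, 1, 0, 2, 2], ![2, 2, 1, 0, 1],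
  ![2, 1, 2, 0, 1], ![2, 1, 1, 0, 2], ![1, 2, 2, 0, 1], ![1, 2, 1, 0, 2], ![1, 1, 2, 0, 2],
  ![2, 2, 1, 1, 0], ![2, 1, 2, 1, 0], ![2, 1, 1, 2, 0], ![1, 2, 2, 1, 0], ![1, 2, 1, 2, 0],
  ![1, 1, 2, 2, 0]}

/-- Partition of the 30 points into six 5-cycles of the "distance √10" graph. -/
def C : Fin 6 → Finset V3
  | 0 => {![0, 2, 2, 1, 1], ![2, 0, 1, 1, 2], ![1, 2, 1, 2, 0], ![1, 1, 2, 0, 2], ![2, 1, 0, 2, 1]}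
  | 1 => {![0, 2, 1, 2, 1], ![2, 1, 1, 0, 2], ![1, 1, 2, 2, 0], ![1, 2, 0, 1, 2], ![2, 0, 2, 1, 1]}
  | 2 => {![0, 2, 1, 1, 2], ![2, 1, 2, 1, 0], ![1, 1, 0, 2, 2], ![1, 2, 2, 0, 1], ![2, 0, 1, 2, 1]}
  | 3 => {![0, 1, 2, 2, 1], ![2, 2, 1, 0, 1], ![1, 0, 1, 2, 2], ![1, 2, 2, 1, 0], ![2, 1, 0, 1, 2]}
  | 4 => {![0, 1, 2, 1, 2], ![2, 1, 1, 2, 0], ![1, 2, 1, 0, 2], ![1, 0, 2, 2, 1], ![2, 2, 0, 1, 1]}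
  | 5 => {![0, 1, 1, 2, 2], ![2, 2, 1, 1, 0], ![1, 0, 2, 1, 2], ![1, 2, 0, 2, 1], ![2, 1, 2, 0, 1]}

/-- the classifier -/
def cls (w : V3) : Fin 6 :=
  if w ∈ C 0 then 0 else if w ∈ C 1 then 1 else if w ∈ C 2 then 2 else
  if w ∈ C 3 then 3 else if w ∈ C 4 then 4 else 5

set_option maxRecDepth 100000 in
set_option maxHeartbeats 4000000 in
lemma mem_C_cls : ∀ w ∈ Sz, w ∈ C (cls w) := by decide

set_option maxRecDepth 100000 in
set_option maxHeartbeats 4000000 in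
lemma class3 : ∀ j : Fin 6, ∀ a ∈ C j, ∀ b ∈ C j, ∀ c ∈ C j,
    a ≠ b → a ≠ c → b ≠ c → d2 a b = 10 ∨ d2 a c = 10 ∨ d2 b c = 10 := by decide

set_option maxRecDepth 100000 in
set_option maxHeartbeats 4000000 in
lemma dbound : ∀ a ∈ Sz, ∀ b ∈ Sz, d2 a b ≤ 10 := by decide

set_option maxRecDepth 100000 in
set_option maxHeartbeats 4000000 in
lemma mem_Sz : ∀ w : V3,
    (Finset.univ.filter (fun i => w i = 0)).card = 1 →
    (Finset.univ.filter (fun i => w i = 1)).card = 2 →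
    (Finset.univ.filter (fun i => w i = 2)).card = 2 → w ∈ Sz := by decide

lemma dist_toR (a b : V3) : dist (toR a) (toR b) = Real.sqrt ((d2 a b : ℝ)) := by
  rw [EuclideanSpace.dist_eq]
  congr 1
  rw [d2]
  push_cast
  refine Finset.sum_congr rfl fun i _ => ?_
  rw [Real.dist_eq, sq_abs, sq]
  rfl

/-- Every element of `L 1 2 2` is `toR w` for some `w ∈ Sz`. -/
lemma L_sub : ∀ x ∈ L 1 2 2, ∃ w ∈ Sz, toR w = x := by
  intro x hx
  obtain ⟨h1, h0, hp⟩ := hx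
  -- every coordinate is -1, 0 or 1
  have hval : ∀ i, x i = -1 ∨ x i = 0 ∨ x i = 1 := by
    intro i
    by_contra hcon
    push_neg at hcon
    obtain ⟨e1, e0, ep⟩ := hcon
    set A := Finset.univ.filter (fun i => x i = (-1:ℝ)) with hA
    set B := Finset.univ.filter (fun i => x i = (0:ℝ)) with hB
    set Cc := Finset.univ.filter (fun i => x i = (1:ℝ)) with hC
    have hdAB : Disjoint A B := by
      rw [Finset.disjoint_filter]; intro j _ hj; rw [hj]; norm_num
    have hdAC : Disjoint A Cc := by
      rw [Finset.disjoint_filter]; intro j _ hj; rw [hj]; norm_num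
    have hdBC : Disjoint B Cc := by
      rw [Finset.disjoint_filter]; intro j _ hj; rw [hj]; norm_num
    have hcard : (A ∪ B ∪ Cc).card = 5 := by
      rw [Finset.card_union_of_disjoint, Finset.card_union_of_disjoint hdAB, h1, h0, hp]
      exact Finset.disjoint_union_left.mpr ⟨hdAC, hdBC⟩
    have huniv : A ∪ B ∪ Cc = Finset.univ := by
      apply Finset.eq_univ_of_card
      rw [hcard]; rfl
    have hmem : i ∈ A ∪ B ∪ Cc := huniv ▸ Finset.mem_univ i
    simp only [Finset.mem_union, hA, hB, hC, Finset.mem_filter, Finset.mem_univ,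
      true_and] at hmem
    tauto
  set w : V3 := fun i => if x i = -1 then 0 else if x i = 0 then 1 else 2 with hw
  have hxw : ∀ i, x i = ((val (w i) : ℤ) : ℝ) := by
    intro i
    rcases hval i with h | h | h <;> norm_num [hw, h, val] <;> try decide
    exact (show (1:ℝ) = ((1:ℤ):ℝ) by norm_num)
  have hiff1 : ∀ i : Fin 5, (w i = 0 ↔ x i = -1) := by
    intro i
    rcases hval i with h | h | h <;> norm_num [hw, h] <;> try decide
  have hiff2 : ∀ i : Fin 5, (w i = 1 ↔ x i = 0) := by
    intro i
    rcases hval i with h | h | h <;> norm_num [hw, h] <;> try decide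
  have hiff3 : ∀ i : Fin 5, (w i = 2 ↔ x i = 1) := by
    intro i
    rcases hval i with h | h | h <;> norm_num [hw, h] <;> try decide
  refine ⟨w, mem_Sz w ?_ ?_ ?_, WithLp.ofLp_injective 2 (funext fun i => (hxw i).symm)⟩
  · rw [show (Finset.univ.filter (fun i => w i = 0)) =
        (Finset.univ.filter (fun i : Fin (1+2+2) => x i = (-1:ℝ))) from by
      ext i; simp [hiff1 i]]
    exact h1
  · rw [show (Finset.univ.filter (fun i => w i = 1)) =
        (Finset.univ.filter (fun i : Fin (1+2+2) => x i = (0:ℝ))) from by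
      ext i; simp [hiff2 i]]
    exact h0
  · rw [show (Finset.univ.filter (fun i => w i = 2)) =
        (Finset.univ.filter (fun i : Fin (1+2+2) => x i = (1:ℝ))) from by
      ext i; simp [hiff3 i]]
    exact hp

theorem stmt_15 (X : Set (EuclideanSpace ℝ (Fin (1+2+2)))) (hX : X ⊆ L 1 2 2)
    (hD : Metric.diam X < Metric.diam (L 1 2 2)) : X.ncard ≤ 12 := by
  have hXsub : X ⊆ ↑(Sz.image toR) := by
    intro x hx
    obtain ⟨w, hw, hwx⟩ := L_sub x (hX hx)
    exact Finset.mem_coe.mpr (Finset.mem_image.mpr ⟨w, hw, hwx⟩)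
  have hXfin : X.Finite := Set.Finite.subset (Sz.image toR).finite_toSet hXsub
  by_contra hcon
  push_neg at hcon
  set U : Finset V3 := Sz.filter (fun w => toR w ∈ X) with hU
  have hTsub : hXfin.toFinset ⊆ U.image toR := by
    intro x hx
    have hxX : x ∈ X := hXfin.mem_toFinset.mp hx
    obtain ⟨w, hw, hwx⟩ := L_sub x (hX hxX)
    exact Finset.mem_image.mpr ⟨w, Finset.mem_filter.mpr ⟨hw, hwx ▸ hxX⟩, hwx⟩
  have hUcard : 12 < U.card := by
    calc 12 < X.ncard := hcon
    _ = hXfin.toFinset.card := Set.ncard_eq_toFinset_card X hXfin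
    _ ≤ (U.image toR).card := Finset.card_le_card hTsub
    _ ≤ U.card := Finset.card_image_le
  have hmaps : ∀ w ∈ U, cls w ∈ (Finset.univ : Finset (Fin 6)) := fun w _ => Finset.mem_univ _
  have hpig : ∃ j ∈ (Finset.univ : Finset (Fin 6)), 2 < (U.filter fun w => cls w = j).card := by
    apply Finset.exists_lt_card_fiber_of_mul_lt_card_of_maps_to hmaps
    simpa using hUcard
  obtain ⟨j, -, hj⟩ := hpig
  rw [Finset.two_lt_card_iff] at hj
  obtain ⟨a, b, c, ha, hb, hc, hab, hac, hbc⟩ := hj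
  have haU := (Finset.mem_filter.mp ha).1
  have hbU := (Finset.mem_filter.mp hb).1
  have hcU := (Finset.mem_filter.mp hc).1
  have haC : a ∈ C j := (Finset.mem_filter.mp ha).2 ▸ mem_C_cls a (Finset.mem_filter.mp haU).1
  have hbC : b ∈ C j := (Finset.mem_filter.mp hb).2 ▸ mem_C_cls b (Finset.mem_filter.mp hbU).1
  have hcC : c ∈ C j := (Finset.mem_filter.mp hc).2 ▸ mem_C_cls c (Finset.mem_filter.mp hcU).1
  have haX : toR a ∈ X := (Finset.mem_filter.mp haU).2
  have hbX : toR b ∈ X := (Finset.mem_filter.mp hbU).2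
  have hcX : toR c ∈ X := (Finset.mem_filter.mp hcU).2
  have hLdiam : Metric.diam (L 1 2 2) ≤ Real.sqrt 10 := by
    apply Metric.diam_le_of_forall_dist_le (Real.sqrt_nonneg 10)
    intro x hx y hy
    obtain ⟨v, hv, hvx⟩ := L_sub x hx
    obtain ⟨u, hu, huy⟩ := L_sub y hy
    rw [← hvx, ← huy, dist_toR]
    apply Real.sqrt_le_sqrt
    exact_mod_cast dbound v hv u hu
  have hbig : ∃ p q : V3, toR p ∈ X ∧ toR q ∈ X ∧ d2 p q = 10 := by
    rcases class3 j a haC b hbC c hcC hab hac hbc with h | h | h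
    · exact ⟨a, b, haX, hbX, h⟩
    · exact ⟨a, c, haX, hcX, h⟩
    · exact ⟨b, c, hbX, hcX, h⟩
  obtain ⟨p, q, hpX, hqX, hpq⟩ := hbig
  have hd : dist (toR p) (toR q) = Real.sqrt 10 := by
    rw [dist_toR, hpq]; norm_num
  have hXbdd : Bornology.IsBounded X := hXfin.isBounded
  have hfin : Real.sqrt 10 ≤ Metric.diam X := hd ▸ Metric.dist_le_diam_of_mem hXbdd hpX hqX
  linarith
end

section
/- The set X_k = T_k(k+1) ∪ (⋃_{i=1}^{k+1} S_k(i)) ⊆ L_{1k2} has cardinality binomial(k+3,3) + 2 and satisfies D(X_k) < D(L_{1k2}), i.e., no two of its elements are at Euclidean distance sqrt(10). -/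
open scoped Classical

/-- `Sset k i` is `S_k(i+1)` of the paper (0-indexed): vectors of `L 1 k 2` whose
first `i` coordinates are `0` and whose `(i+1)`-st coordinate is `-1`. -/
def Sset (k i : ℕ) : Set (EuclideanSpace ℝ (Fin (1+k+2))) :=
  {x ∈ L 1 k 2 | (∀ j : Fin (1+k+2), (j : ℕ) < i → x j = 0) ∧
    (∀ j : Fin (1+k+2), (j : ℕ) = i → x j = -1)}

/-- `Tset k i` is `T_k(i+1)` of the paper (0-indexed): vectors of `L 1 k 2` whose
first `i` coordinates are `0` and whose `(i+1)`-st coordinate is `1`. -/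
def Tset (k i : ℕ) : Set (EuclideanSpace ℝ (Fin (1+k+2))) :=
  {x ∈ L 1 k 2 | (∀ j : Fin (1+k+2), (j : ℕ) < i → x j = 0) ∧
    (∀ j : Fin (1+k+2), (j : ℕ) = i → x j = 1)}

/-- `Xk k` is the paper's `X_k = T_k(k+1) ∪ ⋃_{i=1}^{k+1} S_k(i)`. -/
def Xk (k : ℕ) : Set (EuclideanSpace ℝ (Fin (1+k+2))) :=
  Tset k k ∪ ⋃ i ∈ Finset.range (k+1), Sset k i


namespace Aux

variable {k : ℕ}

/-- trichotomy of coordinates -/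
lemma tri {x : EuclideanSpace ℝ (Fin (1+k+2))} (hx : x ∈ L 1 k 2) (i : Fin (1+k+2)) :
    x i = -1 ∨ x i = 0 ∨ x i = 1 := by
  obtain ⟨h1, h2, h3⟩ := hx
  by_contra h
  push_neg at h
  obtain ⟨e1, e2, e3⟩ := h
  set A := Finset.univ.filter (fun j => x j = (-1:ℝ)) with hA
  set B := Finset.univ.filter (fun j => x j = (0:ℝ)) with hB
  set C := Finset.univ.filter (fun j => x j = (1:ℝ)) with hC
  have dAB : Disjoint A B := by
    simp only [Finset.disjoint_left, hA, hB, Finset.mem_filter]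
    rintro a ⟨-, ha⟩ ⟨-, hb⟩; rw [ha] at hb; norm_num at hb
  have dAC : Disjoint A C := by
    simp only [Finset.disjoint_left, hA, hC, Finset.mem_filter]
    rintro a ⟨-, ha⟩ ⟨-, hb⟩; rw [ha] at hb; norm_num at hb
  have dBC : Disjoint B C := by
    simp only [Finset.disjoint_left, hB, hC, Finset.mem_filter]
    rintro a ⟨-, ha⟩ ⟨-, hb⟩; rw [ha] at hb; norm_num at hb
  have hsub : A ∪ B ∪ C ⊆ Finset.univ.erase i := by
    intro a ha
    rw [Finset.mem_erase]
    refine ⟨?_, Finset.mem_univ _⟩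
    rintro rfl
    simp only [Finset.mem_union, hA, hB, hC, Finset.mem_filter] at ha
    rcases ha with (⟨-, h⟩|⟨-, h⟩)|⟨-, h⟩ <;> [exact e1 h; exact e2 h; exact e3 h]
  have hcard : (A ∪ B ∪ C).card = 1 + k + 2 := by
    rw [Finset.card_union_of_disjoint, Finset.card_union_of_disjoint dAB, h1, h2, h3]
    exact Finset.disjoint_union_left.2 ⟨dAC, dBC⟩
  have := Finset.card_le_card hsub
  rw [hcard, Finset.card_erase_of_mem (Finset.mem_univ _), Finset.card_univ, Fintype.card_fin] at this
  omega

lemma sum_sq {x : EuclideanSpace ℝ (Fin (1+k+2))} (hx : x ∈ L 1 k 2) :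
    ∑ i, x i ^ 2 = 3 := by
  have h : ∀ i, x i ^ 2 = (if x i = (-1:ℝ) then (1:ℝ) else 0) + (if x i = (1:ℝ) then (1:ℝ) else 0) := by
    intro i
    rcases tri hx i with h|h|h <;> rw [h] <;> norm_num
  rw [Finset.sum_congr rfl (fun i _ => h i), Finset.sum_add_distrib,
    Finset.sum_boole, Finset.sum_boole, hx.1, hx.2.2]
  norm_num

lemma neg_unique {x : EuclideanSpace ℝ (Fin (1+k+2))} (hx : x ∈ L 1 k 2)
    {p q : Fin (1+k+2)} (hp : x p = -1) (hq : x q = -1) : p = q := by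
  obtain ⟨a, ha⟩ := Finset.card_eq_one.1 hx.1
  have h1 : p ∈ Finset.univ.filter (fun j => x j = (-1:ℝ)) := by simp [hp]
  have h2 : q ∈ Finset.univ.filter (fun j => x j = (-1:ℝ)) := by simp [hq]
  rw [ha, Finset.mem_singleton] at h1 h2
  rw [h1, h2]

lemma exists_neg {x : EuclideanSpace ℝ (Fin (1+k+2))} (hx : x ∈ L 1 k 2) :
    ∃ p, x p = -1 := by
  obtain ⟨a, ha⟩ := Finset.card_eq_one.1 hx.1
  have : a ∈ Finset.univ.filter (fun j => x j = (-1:ℝ)) := ha ▸ Finset.mem_singleton_self a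
  exact ⟨a, (Finset.mem_filter.1 this).2⟩

lemma ones {x : EuclideanSpace ℝ (Fin (1+k+2))} (hx : x ∈ L 1 k 2) :
    ∃ a b : Fin (1+k+2), a ≠ b ∧ x a = 1 ∧ x b = 1 ∧ ∀ c, x c = 1 → c = a ∨ c = b := by
  obtain ⟨a, b, hab, hs⟩ := Finset.card_eq_two.1 hx.2.2
  have ha : x a = 1 := by
    have : a ∈ Finset.univ.filter (fun j => x j = (1:ℝ)) := by
      rw [hs]; simp
    exact (Finset.mem_filter.1 this).2
  have hb : x b = 1 := by
    have : b ∈ Finset.univ.filter (fun j => x j = (1:ℝ)) := by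
      rw [hs]; simp
    exact (Finset.mem_filter.1 this).2
  refine ⟨a, b, hab, ha, hb, fun c hc => ?_⟩
  have : c ∈ Finset.univ.filter (fun j => x j = (1:ℝ)) := by simp [hc]
  rw [hs] at this
  simpa using this


lemma card_filter_lt (m : ℕ) (hm : m ≤ 1+k+2) :
    (Finset.univ.filter (fun j : Fin (1+k+2) => (j:ℕ) < m)).card = m := by
  have he : Finset.univ.filter (fun j : Fin (1+k+2) => (j:ℕ) < m)
      = (Finset.range m).attachFin (fun a ha => lt_of_lt_of_le (Finset.mem_range.1 ha) hm) := by
    ext j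
    simp [Finset.mem_attachFin]
  rw [he, Finset.card_attachFin, Finset.card_range]

/-- for a T-type vector the zeros are exactly the first `k` coordinates -/
lemma T_zeros {y : EuclideanSpace ℝ (Fin (1+k+2))} (hy : y ∈ L 1 k 2)
    (hz : ∀ j : Fin (1+k+2), (j:ℕ) < k → y j = 0) :
    ∀ j : Fin (1+k+2), y j = 0 → (j:ℕ) < k := by
  have hsub : Finset.univ.filter (fun j : Fin (1+k+2) => (j:ℕ) < k)
      ⊆ Finset.univ.filter (fun j => y j = (0:ℝ)) := by
    intro j hj
    simp only [Finset.mem_filter, Finset.mem_univ, true_and] at hj ⊢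
    exact hz j hj
  have hcard : (Finset.univ.filter (fun j => y j = (0:ℝ))).card ≤
      (Finset.univ.filter (fun j : Fin (1+k+2) => (j:ℕ) < k)).card := by
    rw [hy.2.1, card_filter_lt k (by omega)]
  have := Finset.eq_of_subset_of_card_le hsub hcard
  intro j hj
  have : j ∈ Finset.univ.filter (fun j : Fin (1+k+2) => (j:ℕ) < k) := by
    rw [this]; simp [hj]
  simpa using this

/-- case analysis for members of `Xk` -/
lemma Xk_cases {x : EuclideanSpace ℝ (Fin (1+k+2))} (hx : x ∈ Xk k) :
    x ∈ L 1 k 2 ∧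
    ((∃ p : Fin (1+k+2), x p = -1 ∧ ∀ j : Fin (1+k+2), (j:ℕ) < (p:ℕ) → x j = 0)
     ∨ ((∀ j : Fin (1+k+2), (j:ℕ) < k → x j = 0) ∧ x ⟨k, by omega⟩ = 1)) := by
  rcases hx with hx | hx
  · obtain ⟨hL, hz, ho⟩ := hx
    exact ⟨hL, Or.inr ⟨hz, ho ⟨k, by omega⟩ rfl⟩⟩
  · simp only [Set.mem_iUnion] at hx
    obtain ⟨i, hi, hL, hz, hneg⟩ := hx
    have hik : i < k + 1 := Finset.mem_range.1 hi
    refine ⟨hL, Or.inl ⟨⟨i, by omega⟩, hneg ⟨i, by omega⟩ rfl, fun j hj => hz j hj⟩⟩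

section Key
variable {x y : EuclideanSpace ℝ (Fin (1+k+2))} {p q : Fin (1+k+2)}

lemma key_SS (hy : y ∈ L 1 k 2)
    (hp : x p = -1) (hpz : ∀ j : Fin (1+k+2), (j:ℕ) < (p:ℕ) → x j = 0)
    (hq : y q = -1) (hqz : ∀ j : Fin (1+k+2), (j:ℕ) < (q:ℕ) → y j = 0)
    (hpq : p ≠ q) (h1 : y p = 1) (h2 : x q = 1) : False := by
  have hqp : ¬ ((p:ℕ) < (q:ℕ)) := fun h => by rw [hqz p h] at h1; norm_num at h1
  have hpq' : ¬ ((q:ℕ) < (p:ℕ)) := fun h => by rw [hpz q h] at h2; norm_num at h2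
  exact hpq (Fin.ext (by omega))

lemma key_ST (hx : x ∈ L 1 k 2) (hy : y ∈ L 1 k 2)
    (hp : x p = -1) (hpz : ∀ j : Fin (1+k+2), (j:ℕ) < (p:ℕ) → x j = 0)
    (hyz : ∀ j : Fin (1+k+2), (j:ℕ) < k → y j = 0) (hyk : y ⟨k, by omega⟩ = 1)
    (hq : y q = -1) (hpq : p ≠ q) (h1 : y p = 1) (h2 : x q = 1) :
    ∃ i : Fin (1+k+2), i ≠ p ∧ i ≠ q ∧ x i = 1 ∧ y i = 1 := by
  -- q is at position k+1 or k+2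
  have hq1 : ¬ ((q:ℕ) < k) := fun h => by rw [hyz q h] at hq; norm_num at hq
  have hq2 : (q:ℕ) ≠ k := by
    intro h
    have : q = ⟨k, by omega⟩ := Fin.ext h
    rw [this, hyk] at hq; norm_num at hq
  have hqk : k + 1 ≤ (q:ℕ) := by omega
  -- p is at position k
  have hpk1 : ¬ ((p:ℕ) < k) := fun h => by rw [hyz p h] at h1; norm_num at h1
  obtain ⟨a, b, hab, hxa, hxb, hone⟩ := ones hx
  have ha1 : ¬ ((a:ℕ) < (p:ℕ)) := fun h => by rw [hpz a h] at hxa; norm_num at hxa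
  have hb1 : ¬ ((b:ℕ) < (p:ℕ)) := fun h => by rw [hpz b h] at hxb; norm_num at hxb
  have ha2 : a ≠ p := fun h => by rw [h, hp] at hxa; norm_num at hxa
  have hb2 : b ≠ p := fun h => by rw [h, hp] at hxb; norm_num at hxb
  have ha3 : (p:ℕ) + 1 ≤ (a:ℕ) := by
    rcases Nat.lt_or_ge (p:ℕ) (a:ℕ) with h | h
    · omega
    · exact absurd (Fin.ext (by omega) : a = p) ha2
  have hb3 : (p:ℕ) + 1 ≤ (b:ℕ) := by
    rcases Nat.lt_or_ge (p:ℕ) (b:ℕ) with h | h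
    · omega
    · exact absurd (Fin.ext (by omega) : b = p) hb2
  have hpk : (p:ℕ) = k := by
    by_contra h
    have hk1 : k + 1 ≤ (p:ℕ) := by omega
    have : (a:ℕ) = k + 2 := by have := a.isLt; omega
    have hbb : (b:ℕ) = k + 2 := by have := b.isLt; omega
    exact hab (Fin.ext (by omega))
  -- x is 1 at positions k+1 and k+2
  have hax : (a:ℕ) = k+1 ∨ (a:ℕ) = k+2 := by have := a.isLt; omega
  have hbx : (b:ℕ) = k+1 ∨ (b:ℕ) = k+2 := by have := b.isLt; omega
  have hx1 : x ⟨k+1, by omega⟩ = 1 ∧ x ⟨k+2, by omega⟩ = 1 := by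
    rcases hax with h | h <;> rcases hbx with h' | h'
    · exact absurd (Fin.ext (by omega)) hab
    · exact ⟨by rw [← show a = ⟨k+1, by omega⟩ from Fin.ext h]; exact hxa,
             by rw [← show b = ⟨k+2, by omega⟩ from Fin.ext h']; exact hxb⟩
    · exact ⟨by rw [← show b = ⟨k+1, by omega⟩ from Fin.ext h']; exact hxb,
             by rw [← show a = ⟨k+2, by omega⟩ from Fin.ext h]; exact hxa⟩
    · exact absurd (Fin.ext (by omega)) hab
  -- the witness
  have hqlt : (q:ℕ) = k+1 ∨ (q:ℕ) = k+2 := by have := q.isLt; omega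
  set r : Fin (1+k+2) := if (q:ℕ) = k+1 then ⟨k+2, by omega⟩ else ⟨k+1, by omega⟩ with hr
  have hrq : (r:ℕ) ≠ (q:ℕ) := by
    rcases hqlt with h | h <;> simp [hr, h]
  have hrk : k+1 ≤ (r:ℕ) := by
    rcases hqlt with h | h <;> simp [hr, h]
  have hxr : x r = 1 := by
    rcases hqlt with h | h
    · rw [hr, if_pos h]; exact hx1.2
    · rw [hr, if_neg (by omega)]; exact hx1.1
  have hyr : y r = 1 := by
    rcases tri hy r with h | h | h
    · exact absurd (congrArg Fin.val (neg_unique hy h hq)) hrq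
    · exact absurd (T_zeros hy hyz r h) (by omega)
    · exact h
  exact ⟨r, fun h => by rw [← h] at hpk; omega,
    fun h => hrq (congrArg Fin.val h), hxr, hyr⟩

lemma key_TT (hxk : x ⟨k, by omega⟩ = 1) (hyk : y ⟨k, by omega⟩ = 1)
    (hp : x p = -1) (hq : y q = -1) :
    ∃ i : Fin (1+k+2), i ≠ p ∧ i ≠ q ∧ x i = 1 ∧ y i = 1 := by
  refine ⟨⟨k, by omega⟩, fun h => ?_, fun h => ?_, hxk, hyk⟩
  · rw [h, hp] at hxk; norm_num at hxk
  · rw [h, hq] at hyk; norm_num at hyk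

lemma key (hx : x ∈ Xk k) (hy : y ∈ Xk k)
    (hp : x p = -1) (hq : y q = -1) (hpq : p ≠ q) (h1 : y p = 1) (h2 : x q = 1) :
    ∃ i : Fin (1+k+2), i ≠ p ∧ i ≠ q ∧ x i = 1 ∧ y i = 1 := by
  obtain ⟨hxL, hxc⟩ := Xk_cases hx
  obtain ⟨hyL, hyc⟩ := Xk_cases hy
  rcases hxc with ⟨p₀, hp₀, hpz⟩ | ⟨hxz, hxk⟩ <;> rcases hyc with ⟨q₀, hq₀, hqz⟩ | ⟨hyz, hyk⟩
  · obtain rfl : p = p₀ := neg_unique hxL hp hp₀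
    obtain rfl : q = q₀ := neg_unique hyL hq hq₀
    exact absurd (key_SS hyL hp hpz hq hqz hpq h1 h2) (fun h => h)
  · obtain rfl : p = p₀ := neg_unique hxL hp hp₀
    exact key_ST hxL hyL hp hpz hyz hyk hq hpq h1 h2
  · obtain rfl : q = q₀ := neg_unique hyL hq hq₀
    obtain ⟨i, h1', h2', h3', h4'⟩ := key_ST hyL hxL hq hqz hxz hxk hp (Ne.symm hpq) h2 h1
    exact ⟨i, h2', h1', h4', h3'⟩
  · exact key_TT hxk hyk hp hq

end Key


lemma inner_ge {x y : EuclideanSpace ℝ (Fin (1+k+2))} (hx : x ∈ Xk k) (hy : y ∈ Xk k) :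
    (-1:ℝ) ≤ ∑ i, x i * y i := by
  have hxL := (Xk_cases hx).1
  have hyL := (Xk_cases hy).1
  obtain ⟨p, hp⟩ := exists_neg hxL
  obtain ⟨q, hq⟩ := exists_neg hyL
  have hx01 : ∀ i, i ≠ p → 0 ≤ x i := by
    intro i hi
    rcases tri hxL i with h | h | h
    · exact absurd (neg_unique hxL h hp) hi
    · rw [h]
    · rw [h]; norm_num
  have hy01 : ∀ i, i ≠ q → 0 ≤ y i := by
    intro i hi
    rcases tri hyL i with h | h | h
    · exact absurd (neg_unique hyL h hq) hi
    · rw [h]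
    · rw [h]; norm_num
  by_cases hpq : p = q
  · subst hpq
    rw [← Finset.add_sum_erase _ _ (Finset.mem_univ p)]
    have h1 : x p * y p = 1 := by rw [hp, hq]; norm_num
    have h2 : (0:ℝ) ≤ ∑ i ∈ Finset.univ.erase p, x i * y i := by
      refine Finset.sum_nonneg fun i hi => ?_
      exact mul_nonneg (hx01 i (Finset.ne_of_mem_erase hi)) (hy01 i (Finset.ne_of_mem_erase hi))
    linarith
  · rw [← Finset.add_sum_erase _ _ (Finset.mem_univ p),
      ← Finset.add_sum_erase _ _ (Finset.mem_erase.2 ⟨Ne.symm hpq, Finset.mem_univ q⟩)]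
    have hR0 : (0:ℝ) ≤ ∑ i ∈ (Finset.univ.erase p).erase q, x i * y i := by
      refine Finset.sum_nonneg fun i hi => ?_
      have h1 := Finset.ne_of_mem_erase hi
      have h2 := Finset.ne_of_mem_erase (Finset.mem_of_mem_erase hi)
      exact mul_nonneg (hx01 i h2) (hy01 i h1)
    by_cases hkey : y p = 1 ∧ x q = 1
    · obtain ⟨i₀, hi1, hi2, hi3, hi4⟩ := key hx hy hp hq hpq hkey.1 hkey.2
      have hmem : i₀ ∈ (Finset.univ.erase p).erase q :=
        Finset.mem_erase.2 ⟨hi2, Finset.mem_erase.2 ⟨hi1, Finset.mem_univ _⟩⟩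
      have hR1 : (1:ℝ) ≤ ∑ i ∈ (Finset.univ.erase p).erase q, x i * y i := by
        have := Finset.single_le_sum (f := fun i => x i * y i)
          (fun i hi => mul_nonneg (hx01 i (Finset.ne_of_mem_erase (Finset.mem_of_mem_erase hi)))
            (hy01 i (Finset.ne_of_mem_erase hi))) hmem
        simp only [hi3, hi4, one_mul] at this
        exact this
      have e1 : x p * y p = -1 := by rw [hp, hkey.1]; norm_num
      have e2 : x q * y q = -1 := by rw [hq, hkey.2]; norm_num
      linarith
    · rw [not_and_or] at hkey
      rcases hkey with h | h
      · have hyp : y p = 0 := by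
          rcases tri hyL p with h' | h' | h'
          · exact absurd (neg_unique hyL h' hq) hpq
          · exact h'
          · exact absurd h' h
        have e1 : x p * y p = 0 := by rw [hyp]; ring
        have e2 : (-1:ℝ) ≤ x q * y q := by
          have := hx01 q (Ne.symm hpq)
          have hle : x q ≤ 1 := by
            rcases tri hxL q with h' | h' | h' <;> rw [h'] <;> norm_num
          rw [hq]
          nlinarith
        linarith
      · have hxq : x q = 0 := by
          rcases tri hxL q with h' | h' | h'
          · exact absurd (neg_unique hxL h' hp) (Ne.symm hpq)
          · exact h'
          · exact absurd h' h
        have e2 : x q * y q = 0 := by rw [hxq]; ring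
        have e1 : (-1:ℝ) ≤ x p * y p := by
          have := hy01 p hpq
          have hle : y p ≤ 1 := by
            rcases tri hyL p with h' | h' | h' <;> rw [h'] <;> norm_num
          rw [hp]
          nlinarith
        linarith

lemma dist_le {x y : EuclideanSpace ℝ (Fin (1+k+2))} (hx : x ∈ Xk k) (hy : y ∈ Xk k) :
    dist x y ≤ Real.sqrt 8 := by
  rw [EuclideanSpace.dist_eq]
  apply Real.sqrt_le_sqrt
  have he : ∀ i : Fin (1+k+2), dist (x i) (y i) ^ 2 = x i ^ 2 + y i ^ 2 - 2 * (x i * y i) := by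
    intro i
    rw [Real.dist_eq, sq_abs]
    ring
  rw [Finset.sum_congr rfl (fun i _ => he i)]
  rw [Finset.sum_sub_distrib, Finset.sum_add_distrib, ← Finset.mul_sum,
    sum_sq (Xk_cases hx).1, sum_sq (Xk_cases hy).1]
  have := inner_ge hx hy
  linarith


/-- witness vectors realizing distance `sqrt 10` in `L 1 k 2` -/
def va (k : ℕ) : EuclideanSpace ℝ (Fin (1+k+2)) :=
  WithLp.toLp 2 (fun i : Fin (1+k+2) => (if (i:ℕ) = 0 then -1 else if (i:ℕ) = 1 ∨ (i:ℕ) = 2 then 1 else 0 : ℝ))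

def vb (k : ℕ) : EuclideanSpace ℝ (Fin (1+k+2)) :=
  WithLp.toLp 2 (fun i : Fin (1+k+2) => (if (i:ℕ) = 0 then 1 else if (i:ℕ) = 1 then -1 else if (i:ℕ) = 3 then 1 else 0 : ℝ))

lemma va_mem (hk : 1 ≤ k) : va k ∈ L 1 k 2 := by
  refine ⟨?_, ?_, ?_⟩
  · have h : Finset.univ.filter (fun i => va k i = (-1:ℝ))
        = {(⟨0, by omega⟩ : Fin (1+k+2))} := by
      ext j
      simp only [Finset.mem_filter, Finset.mem_univ, true_and, Finset.mem_singleton]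
      simp only [va, WithLp.ofLp_toLp]
      constructor
      · intro h
        split_ifs at h with h1 h2
        · exact Fin.ext h1
        · norm_num at h
        · norm_num at h
      · rintro rfl; norm_num
    rw [h, Finset.card_singleton]
  · have h : Finset.univ.filter (fun i => va k i = (0:ℝ))
        = ({⟨0, by omega⟩, ⟨1, by omega⟩, ⟨2, by omega⟩} : Finset (Fin (1+k+2)))ᶜ := by
      ext j
      simp only [Finset.mem_filter, Finset.mem_univ, true_and, Finset.mem_compl,
        Finset.mem_insert, Finset.mem_singleton, Fin.ext_iff]
      simp only [va, WithLp.ofLp_toLp]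
      constructor
      · intro h
        split_ifs at h with h1 h2
        · norm_num at h
        · norm_num at h
        · push_neg at h2; omega
      · intro h
        rw [if_neg (by omega), if_neg (by omega)]
    rw [h, Finset.card_compl]
    have h3 : ({⟨0, by omega⟩, ⟨1, by omega⟩, ⟨2, by omega⟩} : Finset (Fin (1+k+2))).card = 3 := by
      rw [Finset.card_insert_of_notMem (by simp [Fin.ext_iff]),
        Finset.card_insert_of_notMem (by simp [Fin.ext_iff]), Finset.card_singleton]
    rw [h3, Fintype.card_fin]
    omega
  · have h : Finset.univ.filter (fun i => va k i = (1:ℝ))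
        = ({⟨1, by omega⟩, ⟨2, by omega⟩} : Finset (Fin (1+k+2))) := by
      ext j
      simp only [Finset.mem_filter, Finset.mem_univ, true_and,
        Finset.mem_insert, Finset.mem_singleton, Fin.ext_iff, Fin.val_mk]
      simp only [va, WithLp.ofLp_toLp]
      constructor
      · intro h
        split_ifs at h with h1 h2
        · norm_num at h
        · omega
        · norm_num at h
      · intro h
        rw [if_neg (by omega), if_pos (by omega)]
    rw [h, Finset.card_insert_of_notMem (by simp [Fin.ext_iff]), Finset.card_singleton]

lemma vb_mem (hk : 1 ≤ k) : vb k ∈ L 1 k 2 := by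
  refine ⟨?_, ?_, ?_⟩
  · have h : Finset.univ.filter (fun i => vb k i = (-1:ℝ))
        = {(⟨1, by omega⟩ : Fin (1+k+2))} := by
      ext j
      simp only [Finset.mem_filter, Finset.mem_univ, true_and, Finset.mem_singleton,
        Fin.ext_iff, Fin.val_mk]
      simp only [vb, WithLp.ofLp_toLp]
      constructor
      · intro h
        split_ifs at h with h1 h2 h3
        · norm_num at h
        · omega
        · norm_num at h
        · norm_num at h
      · intro h
        rw [if_neg (by omega), if_pos (by omega)]
    rw [h, Finset.card_singleton]
  · have h : Finset.univ.filter (fun i => vb k i = (0:ℝ))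
        = ({⟨0, by omega⟩, ⟨1, by omega⟩, ⟨3, by omega⟩} : Finset (Fin (1+k+2)))ᶜ := by
      ext j
      simp only [Finset.mem_filter, Finset.mem_univ, true_and, Finset.mem_compl,
        Finset.mem_insert, Finset.mem_singleton, Fin.ext_iff, Fin.val_mk]
      simp only [vb, WithLp.ofLp_toLp]
      constructor
      · intro h
        split_ifs at h with h1 h2 h3
        · norm_num at h
        · norm_num at h
        · norm_num at h
        · omega
      · intro h
        rw [if_neg (by omega), if_neg (by omega), if_neg (by omega)]
    rw [h, Finset.card_compl]
    have h3 : ({⟨0, by omega⟩, ⟨1, by omega⟩, ⟨3, by omega⟩} : Finset (Fin (1+k+2))).card = 3 := by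
      rw [Finset.card_insert_of_notMem (by simp [Fin.ext_iff]),
        Finset.card_insert_of_notMem (by simp [Fin.ext_iff]), Finset.card_singleton]
    rw [h3, Fintype.card_fin]
    omega
  · have h : Finset.univ.filter (fun i => vb k i = (1:ℝ))
        = ({⟨0, by omega⟩, ⟨3, by omega⟩} : Finset (Fin (1+k+2))) := by
      ext j
      simp only [Finset.mem_filter, Finset.mem_univ, true_and,
        Finset.mem_insert, Finset.mem_singleton, Fin.ext_iff, Fin.val_mk]
      simp only [vb, WithLp.ofLp_toLp]
      constructor
      · intro h
        split_ifs at h with h1 h2 h3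
        · omega
        · norm_num at h
        · omega
        · norm_num at h
      · intro h
        rcases h with h | h
        · rw [if_pos (by omega)]
        · rw [if_neg (by omega), if_neg (by omega), if_pos (by omega)]
    rw [h, Finset.card_insert_of_notMem (by simp [Fin.ext_iff]), Finset.card_singleton]

lemma dist_va_vb (hk : 1 ≤ k) : dist (va k) (vb k) = Real.sqrt 10 := by
  rw [EuclideanSpace.dist_eq]
  congr 1
  have hsub : ({⟨0, by omega⟩, ⟨1, by omega⟩, ⟨2, by omega⟩, ⟨3, by omega⟩} :
      Finset (Fin (1+k+2))) ⊆ Finset.univ := Finset.subset_univ _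
  rw [← Finset.sum_subset hsub]
  · have d0 : (⟨0, by omega⟩ : Fin (1+k+2)) ∉
        ({⟨1, by omega⟩, ⟨2, by omega⟩, ⟨3, by omega⟩} : Finset (Fin (1+k+2))) := by
      simp [Fin.ext_iff]
    have d1 : (⟨1, by omega⟩ : Fin (1+k+2)) ∉
        ({⟨2, by omega⟩, ⟨3, by omega⟩} : Finset (Fin (1+k+2))) := by
      simp [Fin.ext_iff]
    have d2 : (⟨2, by omega⟩ : Fin (1+k+2)) ∉
        ({⟨3, by omega⟩} : Finset (Fin (1+k+2))) := by
      simp [Fin.ext_iff]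
    rw [Finset.sum_insert d0, Finset.sum_insert d1, Finset.sum_insert d2, Finset.sum_singleton]
    have e0 : dist (va k ⟨0, by omega⟩) (vb k ⟨0, by omega⟩) ^ 2 = 4 := by
      norm_num [va, vb, WithLp.ofLp_toLp, Real.dist_eq]
    have e1 : dist (va k ⟨1, by omega⟩) (vb k ⟨1, by omega⟩) ^ 2 = 4 := by
      norm_num [va, vb, WithLp.ofLp_toLp, Real.dist_eq]
    have e2 : dist (va k ⟨2, by omega⟩) (vb k ⟨2, by omega⟩) ^ 2 = 1 := by
      norm_num [va, vb, WithLp.ofLp_toLp, Real.dist_eq]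
    have e3 : dist (va k ⟨3, by omega⟩) (vb k ⟨3, by omega⟩) ^ 2 = 1 := by
      norm_num [va, vb, WithLp.ofLp_toLp, Real.dist_eq]
    rw [e0, e1, e2, e3]
    norm_num
  · intro i _ hi
    simp only [Finset.mem_insert, Finset.mem_singleton, Fin.ext_iff, Fin.val_mk] at hi
    push_neg at hi
    have hva : va k i = 0 := by
      simp only [va, WithLp.ofLp_toLp]; rw [if_neg (by omega), if_neg (by omega)]
    have hvb : vb k i = 0 := by
      simp only [vb, WithLp.ofLp_toLp]; rw [if_neg (by omega), if_neg (by omega), if_neg (by omega)]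
    rw [hva, hvb]
    simp

lemma L_bounded : Bornology.IsBounded (L 1 k 2) := by
  apply (Metric.isBounded_closedBall (x := (0 : EuclideanSpace ℝ (Fin (1+k+2)))) (r := 2)).subset
  intro x hx
  rw [Metric.mem_closedBall, EuclideanSpace.dist_eq]
  have he : ∀ i : Fin (1+k+2), dist (x i) ((0 : EuclideanSpace ℝ (Fin (1+k+2))) i) ^ 2
      = x i ^ 2 := by
    intro i
    have : (0 : EuclideanSpace ℝ (Fin (1+k+2))) i = 0 := rfl
    rw [this, Real.dist_eq, sub_zero, sq_abs]
  rw [Finset.sum_congr rfl (fun i _ => he i), sum_sq hx]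
  rw [show (2:ℝ) = Real.sqrt 4 by
    rw [show (4:ℝ) = 2^2 by norm_num, Real.sqrt_sq (by norm_num)]]
  exact Real.sqrt_le_sqrt (by norm_num)


/-! ### Cardinality -/

def hvec (k : ℕ) (s : Finset (Fin (1+k+2))) : EuclideanSpace ℝ (Fin (1+k+2)) :=
  WithLp.toLp 2 (fun i => (if i ∈ s then (if ∀ j ∈ s, i ≤ j then -1 else 1) else 0 : ℝ))

lemma hvec_ne_zero_iff {s : Finset (Fin (1+k+2))} (i : Fin (1+k+2)) :
    hvec k s i ≠ 0 ↔ i ∈ s := by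
  constructor
  · intro h
    by_contra hi
    exact h (if_neg hi)
  · intro hi
    show (if i ∈ s then (if ∀ j ∈ s, i ≤ j then (-1:ℝ) else 1) else 0) ≠ 0
    rw [if_pos hi]
    split_ifs <;> norm_num

lemma hvec_min {s : Finset (Fin (1+k+2))} (hne : s.Nonempty) :
    hvec k s (s.min' hne) = -1 := by
  show (if _ ∈ s then (if ∀ j ∈ s, s.min' hne ≤ j then (-1:ℝ) else 1) else 0) = -1
  rw [if_pos (s.min'_mem hne), if_pos (fun j hj => s.min'_le j hj)]

lemma hvec_one {s : Finset (Fin (1+k+2))} (hne : s.Nonempty) {i : Fin (1+k+2)}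
    (hi : i ∈ s) (hmin : i ≠ s.min' hne) : hvec k s i = 1 := by
  show (if i ∈ s then (if ∀ j ∈ s, i ≤ j then (-1:ℝ) else 1) else 0) = 1
  rw [if_pos hi, if_neg]
  intro hall
  exact hmin (le_antisymm (hall _ (s.min'_mem hne)) (s.min'_le i hi))

lemma hvec_zero {s : Finset (Fin (1+k+2))} {i : Fin (1+k+2)} (hi : i ∉ s) :
    hvec k s i = 0 := if_neg hi

lemma hvec_filter_neg {s : Finset (Fin (1+k+2))} (hne : s.Nonempty) :
    Finset.univ.filter (fun i => hvec k s i = (-1:ℝ)) = {s.min' hne} := by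
  ext i
  simp only [Finset.mem_filter, Finset.mem_univ, true_and, Finset.mem_singleton]
  constructor
  · intro h
    by_contra hmin
    have hi : i ∈ s := (hvec_ne_zero_iff i).1 (by rw [h]; norm_num)
    rw [hvec_one hne hi hmin] at h
    norm_num at h
  · rintro rfl
    exact hvec_min hne

lemma hvec_filter_one {s : Finset (Fin (1+k+2))} (hne : s.Nonempty) :
    Finset.univ.filter (fun i => hvec k s i = (1:ℝ)) = s.erase (s.min' hne) := by
  ext i
  simp only [Finset.mem_filter, Finset.mem_univ, true_and, Finset.mem_erase]
  constructor
  · intro h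
    have hi : i ∈ s := (hvec_ne_zero_iff i).1 (by rw [h]; norm_num)
    refine ⟨fun hm => ?_, hi⟩
    rw [hm, hvec_min hne] at h
    norm_num at h
  · rintro ⟨hm, hi⟩
    exact hvec_one hne hi hm

lemma hvec_filter_zero {s : Finset (Fin (1+k+2))} :
    Finset.univ.filter (fun i => hvec k s i = (0:ℝ)) = sᶜ := by
  ext i
  simp only [Finset.mem_filter, Finset.mem_univ, true_and, Finset.mem_compl]
  constructor
  · intro h hi
    exact (hvec_ne_zero_iff i).2 hi h
  · intro hi
    exact hvec_zero hi

lemma hvec_mem_L {s : Finset (Fin (1+k+2))} (hs : s.card = 3) : hvec k s ∈ L 1 k 2 := by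
  have hne : s.Nonempty := Finset.card_pos.1 (by omega)
  refine ⟨?_, ?_, ?_⟩
  · rw [hvec_filter_neg hne, Finset.card_singleton]
  · rw [hvec_filter_zero, Finset.card_compl, hs, Fintype.card_fin]
    omega
  · rw [hvec_filter_one hne, Finset.card_erase_of_mem (s.min'_mem hne), hs]

lemma min_le_k {s : Finset (Fin (1+k+2))} (hs : s.card = 3) (hne : s.Nonempty) :
    (s.min' hne : ℕ) ≤ k := by
  by_contra h
  push_neg at h
  have hsub : s ⊆ Finset.univ.filter (fun j : Fin (1+k+2) => ¬ ((j:ℕ) < k+1)) := by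
    intro j hj
    simp only [Finset.mem_filter, Finset.mem_univ, true_and]
    have h2 := s.min'_le j hj
    rw [Fin.le_def] at h2
    omega
  have hc := Finset.card_le_card hsub
  rw [hs, Finset.filter_not, Finset.card_sdiff_of_subset (Finset.filter_subset _ _), Finset.card_univ,
    Fintype.card_fin, card_filter_lt (k+1) (by omega)] at hc
  omega

lemma hvec_mem_Sunion {s : Finset (Fin (1+k+2))} (hs : s.card = 3) :
    hvec k s ∈ ⋃ i ∈ Finset.range (k+1), Sset k i := by
  have hne : s.Nonempty := Finset.card_pos.1 (by omega)
  simp only [Set.mem_iUnion]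
  refine ⟨(s.min' hne : ℕ), Finset.mem_range.2 (by have := min_le_k hs hne; omega),
    hvec_mem_L hs, fun j hj => ?_, fun j hj => ?_⟩
  · refine hvec_zero (fun hjs => ?_)
    have h2 := s.min'_le j hjs
    rw [Fin.le_def] at h2
    omega
  · rw [show j = s.min' hne from Fin.ext hj]
    exact hvec_min hne

lemma Sunion_rep {x : EuclideanSpace ℝ (Fin (1+k+2))}
    (hx : x ∈ ⋃ i ∈ Finset.range (k+1), Sset k i) :
    ∃ s : Finset (Fin (1+k+2)), s.card = 3 ∧ x = hvec k s := by
  simp only [Set.mem_iUnion] at hx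
  obtain ⟨i, hi, hL, hz, hneg⟩ := hx
  have hik : i < k+1 := Finset.mem_range.1 hi
  obtain ⟨p, hip⟩ : ∃ p : Fin (1+k+2), (p:ℕ) = i := ⟨⟨i, by omega⟩, rfl⟩
  have hxp : x p = -1 := hneg p hip
  set s := Finset.univ.filter (fun j => x j ≠ 0) with hsdef
  have hmem : ∀ j, j ∈ s ↔ x j ≠ 0 := by
    intro j
    simp [hsdef]
  have hcard : s.card = 3 := by
    have he : s = Finset.univ.filter (fun j => x j = (-1:ℝ))
        ∪ Finset.univ.filter (fun j => x j = (1:ℝ)) := by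
      ext j
      simp only [hsdef, Finset.mem_filter, Finset.mem_union, Finset.mem_univ, true_and]
      constructor
      · intro h
        rcases tri hL j with h'|h'|h'
        · exact Or.inl h'
        · exact absurd h' h
        · exact Or.inr h'
      · rintro (h|h) <;> rw [h] <;> norm_num
    rw [he, Finset.card_union_of_disjoint, hL.1, hL.2.2]
    simp only [Finset.disjoint_left, Finset.mem_filter]
    rintro a ⟨-, h1⟩ ⟨-, h2⟩
    rw [h1] at h2
    norm_num at h2
  refine ⟨s, hcard, ?_⟩
  ext j
  have key : hvec k s j = x j := by
    rcases tri hL j with h|h|h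
    · have hj : j = p := neg_unique hL h hxp
      have hjs : j ∈ s := (hmem j).2 (by rw [h]; norm_num)
      show (if j ∈ s then (if ∀ j' ∈ s, j ≤ j' then (-1:ℝ) else 1) else 0) = x j
      rw [if_pos hjs, if_pos, h]
      intro j' hj'
      have h1 : x j' ≠ 0 := (hmem j').1 hj'
      have h2 : ¬ ((j':ℕ) < i) := fun hlt => h1 (hz j' hlt)
      rw [Fin.le_def, hj]
      omega
    · rw [hvec_zero (fun hjs => (hmem j).1 hjs h), h]
    · have hjs : j ∈ s := (hmem j).2 (by rw [h]; norm_num)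
      have hps : p ∈ s := (hmem p).2 (by rw [hxp]; norm_num)
      have hji : ¬ ((j:ℕ) < i) := fun hlt => by rw [hz j hlt] at h; norm_num at h
      have hjp : j ≠ p := fun he => by rw [he, hxp] at h; norm_num at h
      have hij : i < (j:ℕ) := by
        rcases Nat.lt_or_ge i (j:ℕ) with h'|h'
        · exact h'
        · exact absurd (Fin.ext (by omega)) hjp
      show (if j ∈ s then (if ∀ j' ∈ s, j ≤ j' then (-1:ℝ) else 1) else 0) = x j
      rw [if_pos hjs, if_neg, h]
      intro hall
      have h2 := hall p hps
      rw [Fin.le_def] at h2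
      omega
  exact key.symm

lemma hvec_inj {s t : Finset (Fin (1+k+2))}
    (he : hvec k s = hvec k t) : s = t := by
  ext i
  rw [← hvec_ne_zero_iff (k := k) (s := s) i, ← hvec_ne_zero_iff (k := k) (s := t) i, he]

noncomputable def Fset (k : ℕ) : Finset (EuclideanSpace ℝ (Fin (1+k+2))) :=
  (Finset.univ.powersetCard 3).image (hvec k)

lemma Fcard : (Fset k).card = (1+k+2).choose 3 := by
  rw [Fset, Finset.card_image_of_injOn (fun s _ t _ he => hvec_inj he),
    Finset.card_powersetCard, Finset.card_univ, Fintype.card_fin]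

lemma Sunion_eq : (⋃ i ∈ Finset.range (k+1), Sset k i) = ↑(Fset k) := by
  ext x
  simp only [Fset, Finset.coe_image, Set.mem_image, Finset.mem_coe]
  constructor
  · intro hx
    obtain ⟨s, hs3, he⟩ := Sunion_rep hx
    exact ⟨s, Finset.mem_coe.2 (Finset.mem_powersetCard_univ.2 hs3), he.symm⟩
  · rintro ⟨s, hs, rfl⟩
    exact hvec_mem_Sunion (Finset.mem_powersetCard_univ.1 (Finset.mem_coe.1 hs))

/-! ### The two T-type vectors -/

def t1 (k : ℕ) : EuclideanSpace ℝ (Fin (1+k+2)) :=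
  WithLp.toLp 2 (fun i : Fin (1+k+2) => (if (i:ℕ) < k then 0 else if (i:ℕ) = k then 1 else if (i:ℕ) = k+1 then -1 else 1 : ℝ))

def t2 (k : ℕ) : EuclideanSpace ℝ (Fin (1+k+2)) :=
  WithLp.toLp 2 (fun i : Fin (1+k+2) => (if (i:ℕ) < k then 0 else if (i:ℕ) = k then 1 else if (i:ℕ) = k+1 then 1 else -1 : ℝ))

lemma t1_mem_L : t1 k ∈ L 1 k 2 := by
  refine ⟨?_, ?_, ?_⟩
  · have h : Finset.univ.filter (fun i => t1 k i = (-1:ℝ))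
        = {(⟨k+1, by omega⟩ : Fin (1+k+2))} := by
      ext j
      have hlt := j.isLt
      simp only [Finset.mem_filter, Finset.mem_univ, true_and, Finset.mem_singleton,
        Fin.ext_iff, Fin.val_mk]
      simp only [t1, WithLp.ofLp_toLp]
      constructor
      · intro h
        split_ifs at h with h1 h2 h3
        · norm_num at h
        · norm_num at h
        · omega
        · norm_num at h
      · intro h
        rw [if_neg (by omega), if_neg (by omega), if_pos (by omega)]
    rw [h, Finset.card_singleton]
  · have h : Finset.univ.filter (fun i => t1 k i = (0:ℝ))
        = Finset.univ.filter (fun j : Fin (1+k+2) => (j:ℕ) < k) := by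
      ext j
      simp only [Finset.mem_filter, Finset.mem_univ, true_and]
      simp only [t1, WithLp.ofLp_toLp]
      constructor
      · intro h
        split_ifs at h with h1 h2 h3
        · exact h1
        · norm_num at h
        · norm_num at h
        · norm_num at h
      · intro h
        rw [if_pos h]
    rw [h, card_filter_lt k (by omega)]
  · have h : Finset.univ.filter (fun i => t1 k i = (1:ℝ))
        = ({⟨k, by omega⟩, ⟨k+2, by omega⟩} : Finset (Fin (1+k+2))) := by
      ext j
      have hlt := j.isLt
      simp only [Finset.mem_filter, Finset.mem_univ, true_and, Finset.mem_insert,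
        Finset.mem_singleton, Fin.ext_iff, Fin.val_mk]
      simp only [t1, WithLp.ofLp_toLp]
      constructor
      · intro h
        split_ifs at h with h1 h2 h3
        · norm_num at h
        · omega
        · norm_num at h
        · omega
      · intro h
        rcases h with h | h
        · rw [if_neg (by omega), if_pos (by omega)]
        · rw [if_neg (by omega), if_neg (by omega), if_neg (by omega)]
    rw [h, Finset.card_insert_of_notMem (by simp [Fin.ext_iff]), Finset.card_singleton]

lemma t2_mem_L : t2 k ∈ L 1 k 2 := by
  refine ⟨?_, ?_, ?_⟩
  · have h : Finset.univ.filter (fun i => t2 k i = (-1:ℝ))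
        = {(⟨k+2, by omega⟩ : Fin (1+k+2))} := by
      ext j
      have hlt := j.isLt
      simp only [Finset.mem_filter, Finset.mem_univ, true_and, Finset.mem_singleton,
        Fin.ext_iff, Fin.val_mk]
      simp only [t2, WithLp.ofLp_toLp]
      constructor
      · intro h
        split_ifs at h with h1 h2 h3
        · norm_num at h
        · norm_num at h
        · norm_num at h
        · omega
      · intro h
        rw [if_neg (by omega), if_neg (by omega), if_neg (by omega)]
    rw [h, Finset.card_singleton]
  · have h : Finset.univ.filter (fun i => t2 k i = (0:ℝ))
        = Finset.univ.filter (fun j : Fin (1+k+2) => (j:ℕ) < k) := by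
      ext j
      simp only [Finset.mem_filter, Finset.mem_univ, true_and]
      simp only [t2, WithLp.ofLp_toLp]
      constructor
      · intro h
        split_ifs at h with h1 h2 h3
        · exact h1
        · norm_num at h
        · norm_num at h
        · norm_num at h
      · intro h
        rw [if_pos h]
    rw [h, card_filter_lt k (by omega)]
  · have h : Finset.univ.filter (fun i => t2 k i = (1:ℝ))
        = ({⟨k, by omega⟩, ⟨k+1, by omega⟩} : Finset (Fin (1+k+2))) := by
      ext j
      have hlt := j.isLt
      simp only [Finset.mem_filter, Finset.mem_univ, true_and, Finset.mem_insert,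
        Finset.mem_singleton, Fin.ext_iff, Fin.val_mk]
      simp only [t2, WithLp.ofLp_toLp]
      constructor
      · intro h
        split_ifs at h with h1 h2 h3
        · norm_num at h
        · omega
        · omega
        · norm_num at h
      · intro h
        rcases h with h | h
        · rw [if_neg (by omega), if_pos (by omega)]
        · rw [if_neg (by omega), if_neg (by omega), if_pos (by omega)]
    rw [h, Finset.card_insert_of_notMem (by simp [Fin.ext_iff]), Finset.card_singleton]

lemma Tset_eq : Tset k k = {t1 k, t2 k} := by
  apply Set.Subset.antisymm
  · rintro y ⟨hL, hz, ho⟩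
    obtain ⟨q, hq⟩ := exists_neg hL
    have hq1 : ¬ ((q:ℕ) < k) := fun h => by rw [hz q h] at hq; norm_num at hq
    have hq2 : (q:ℕ) ≠ k := fun h => by rw [ho q h] at hq; norm_num at hq
    have hq3 : (q:ℕ) = k+1 ∨ (q:ℕ) = k+2 := by have := q.isLt; omega
    have hval : ∀ j : Fin (1+k+2), (j:ℕ) ≥ k → j ≠ q → y j = 1 := by
      intro j hj hjq
      rcases tri hL j with h|h|h
      · exact absurd (neg_unique hL h hq) hjq
      · exact absurd (T_zeros hL hz j h) (by omega)
      · exact h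
    rcases hq3 with h3 | h3
    · left
      ext j
      have hlt := j.isLt
      rcases Nat.lt_or_ge (j:ℕ) k with hj | hj
      · rw [hz j hj]
        show (0:ℝ) = t1 k j
        show (0:ℝ) = if (j:ℕ) < k then 0 else _
        rw [if_pos hj]
      · have ht : t1 k j = if (j:ℕ) < k then (0:ℝ) else if (j:ℕ) = k then 1
            else if (j:ℕ) = k+1 then -1 else 1 := rfl
        rcases Nat.lt_or_ge (j:ℕ) (k+1) with hj1 | hj1
        · have hjk : (j:ℕ) = k := by omega
          rw [ho j hjk, ht, if_neg (by omega), if_pos hjk]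
        · rcases Nat.lt_or_ge (j:ℕ) (k+2) with hj2 | hj2
          · have hjq : j = q := Fin.ext (by omega)
            have hyj : y j = -1 := by rw [hjq]; exact hq
            rw [hyj, ht, if_neg (by omega), if_neg (by omega), if_pos (by omega)]
          · have : j ≠ q := fun he => by rw [he] at hj2; omega
            rw [hval j (by omega) this, ht, if_neg (by omega), if_neg (by omega),
              if_neg (by omega)]
    · right
      ext j
      have hlt := j.isLt
      have ht : t2 k j = if (j:ℕ) < k then (0:ℝ) else if (j:ℕ) = k then 1
          else if (j:ℕ) = k+1 then 1 else -1 := rfl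
      rcases Nat.lt_or_ge (j:ℕ) k with hj | hj
      · rw [hz j hj, ht, if_pos hj]
      · rcases Nat.lt_or_ge (j:ℕ) (k+1) with hj1 | hj1
        · have hjk : (j:ℕ) = k := by omega
          rw [ho j hjk, ht, if_neg (by omega), if_pos hjk]
        · rcases Nat.lt_or_ge (j:ℕ) (k+2) with hj2 | hj2
          · have : j ≠ q := fun he => by rw [he] at hj2; omega
            rw [hval j (by omega) this, ht, if_neg (by omega), if_neg (by omega),
              if_pos (by omega)]
          · have hjq : j = q := Fin.ext (by omega)
            have hyj : y j = -1 := by rw [hjq]; exact hq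
            rw [hyj, ht, if_neg (by omega), if_neg (by omega), if_neg (by omega)]
  · rintro y (rfl | rfl)
    · refine ⟨t1_mem_L, fun j hj => ?_, fun j hj => ?_⟩
      · show (if (j:ℕ) < k then (0:ℝ) else _) = 0
        rw [if_pos hj]
      · show (if (j:ℕ) < k then (0:ℝ) else if (j:ℕ) = k then 1 else _) = 1
        rw [if_neg (by omega), if_pos hj]
    · refine ⟨t2_mem_L, fun j hj => ?_, fun j hj => ?_⟩
      · show (if (j:ℕ) < k then (0:ℝ) else _) = 0
        rw [if_pos hj]
      · show (if (j:ℕ) < k then (0:ℝ) else if (j:ℕ) = k then 1 else _) = 1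
        rw [if_neg (by omega), if_pos hj]

lemma t1_ne_t2 : t1 k ≠ t2 k := by
  intro h
  have h2 := congrFun (congrArg WithLp.ofLp h) (⟨k+1, by omega⟩ : Fin (1+k+2))
  have e1 : t1 k ⟨k+1, by omega⟩ = -1 := by
    show (if k+1 < k then (0:ℝ) else if k+1 = k then 1 else if k+1 = k+1 then -1 else 1) = -1
    rw [if_neg (by omega), if_neg (by omega), if_pos rfl]
  have e2 : t2 k ⟨k+1, by omega⟩ = 1 := by
    show (if k+1 < k then (0:ℝ) else if k+1 = k then 1 else if k+1 = k+1 then 1 else -1) = 1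
    rw [if_neg (by omega), if_neg (by omega), if_pos rfl]
  rw [e1, e2] at h2
  norm_num at h2

lemma t_notin {z : EuclideanSpace ℝ (Fin (1+k+2))}
    (hzk : z ⟨k, by omega⟩ = 1) (hz0 : ∀ j : Fin (1+k+2), (j:ℕ) < k → z j = 0) :
    z ∉ Fset k := by
  simp only [Fset, Finset.mem_image]
  rintro ⟨s, hs, he⟩
  have hk : (⟨k, by omega⟩ : Fin (1+k+2)) ∈ s :=
    (hvec_ne_zero_iff _).1 (by rw [he, hzk]; norm_num)
  have hall : ∀ j ∈ s, (⟨k, by omega⟩ : Fin (1+k+2)) ≤ j := by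
    intro j hj
    have h1 : z j ≠ 0 := by rw [← he]; exact (hvec_ne_zero_iff j).2 hj
    have h2 : ¬ ((j:ℕ) < k) := fun hlt => h1 (hz0 j hlt)
    rw [Fin.le_def]
    simp only [Fin.val_mk]
    omega
  have : hvec k s ⟨k, by omega⟩ = -1 := by
    show (if _ ∈ s then (if ∀ j ∈ s, _ ≤ j then (-1:ℝ) else 1) else 0) = -1
    rw [if_pos hk, if_pos hall]
  rw [he, hzk] at this
  norm_num at this

lemma t1_val_k : t1 k ⟨k, by omega⟩ = 1 := by
  show (if (k:ℕ) < k then (0:ℝ) else if k = k then 1 else _) = 1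
  rw [if_neg (by omega), if_pos rfl]

lemma t2_val_k : t2 k ⟨k, by omega⟩ = 1 := by
  show (if (k:ℕ) < k then (0:ℝ) else if k = k then 1 else _) = 1
  rw [if_neg (by omega), if_pos rfl]

lemma t1_zeros : ∀ j : Fin (1+k+2), (j:ℕ) < k → t1 k j = 0 := by
  intro j hj
  show (if (j:ℕ) < k then (0:ℝ) else _) = 0
  rw [if_pos hj]

lemma t2_zeros : ∀ j : Fin (1+k+2), (j:ℕ) < k → t2 k j = 0 := by
  intro j hj
  show (if (j:ℕ) < k then (0:ℝ) else _) = 0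
  rw [if_pos hj]

lemma Xk_eq : Xk k = ↑(insert (t1 k) (insert (t2 k) (Fset k))) := by
  rw [Xk, Tset_eq, Sunion_eq]
  simp only [Finset.coe_insert]
  rw [Set.insert_union, Set.singleton_union]

lemma Xk_ncard : (Xk k).ncard = (k+3).choose 3 + 2 := by
  rw [Xk_eq, Set.ncard_coe_finset]
  rw [Finset.card_insert_of_notMem, Finset.card_insert_of_notMem (t_notin t2_val_k t2_zeros),
    Fcard]
  · have h : 1+k+2 = k+3 := by omega
    rw [h]
  · rw [Finset.mem_insert]
    push_neg
    exact ⟨t1_ne_t2, t_notin t1_val_k t1_zeros⟩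

end Aux

theorem stmt_18 (k : ℕ) (hk : 1 ≤ k) :
    (Xk k).ncard = Nat.choose (k+3) 3 + 2 ∧
    (∀ x ∈ Xk k, ∀ y ∈ Xk k, dist x y ≠ Real.sqrt 10) ∧
    Metric.diam (Xk k) < Metric.diam (L 1 k 2) := by
  have h8 : Real.sqrt 8 < Real.sqrt 10 := Real.sqrt_lt_sqrt (by norm_num) (by norm_num)
  refine ⟨Aux.Xk_ncard, ?_, ?_⟩
  · intro x hx y hy
    exact ne_of_lt (lt_of_le_of_lt (Aux.dist_le hx hy) h8)
  · have h1 : Metric.diam (Xk k) ≤ Real.sqrt 8 :=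
      Metric.diam_le_of_forall_dist_le (Real.sqrt_nonneg _)
        (fun x hx y hy => Aux.dist_le hx hy)
    have h2 : Real.sqrt 10 ≤ Metric.diam (L 1 k 2) := by
      rw [← Aux.dist_va_vb hk]
      exact Metric.dist_le_diam_of_mem Aux.L_bounded (Aux.va_mem hk) (Aux.vb_mem hk)
    linarith
end
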